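/- arXiv:1403.1938 — 13 statements merged into one kernel-verified Lean document; each statement's English description precedes it below -/
import Mathlib

section
/- Let Λ be a free ℤ-module of finite rank and let ℓ₁,…,ℓₙ be primitive nonzero elements of the dual lattice Λ^∨ = Hom(Λ,ℤ), viewed inside the real vector space Λ^∨ ⊗ ℝ. Then the following are equivalent: (i) every subset {ℓ_j}_{j∈J} ⊆ {ℓ₁,…,ℓₙ} that is ℝ-linearly independent is a ℤ-basis of the ℤ-module (ℝ-span of {ℓ_j}_{j∈J}) ∩ Λ^∨; (ii) every ℝ-linearly independent subset of {ℓ₁,…,ℓₙ} of maximal rank is a ℤ-basis of the ℤ-module (ℝ-span of that subset) ∩ Λ^∨. -/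
/-!
Extend an `ℝ`-linearly independent subfamily `J` to one `J'` of maximal rank. An integral
vector in the real span of `J` then lies in the integral span of `J'`, and its components
along `J' \ J` form an integral vector in the real span of `J` as well as in that of `J' \ J`;
as these spans meet only in `0`, those components vanish.
-/

open Set Submodule

theorem LinearIndepOn.exists_superset_span_eq_span_range {ι K V : Type*} [DivisionRing K]
    [AddCommGroup V] [Module K V] {g : ι → V} {s : Set ι} (hs : LinearIndepOn K g s) :
    ∃ t, s ⊆ t ∧ LinearIndepOn K g t ∧ span K (g '' t) = span K (range g) := by
  obtain ⟨t, -, hst, hspan, ht⟩ := exists_linearIndepOn_extension hs (subset_univ s)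
  refine ⟨t, hst, ht, le_antisymm (span_mono (image_subset_range g t)) (span_le.2 ?_)⟩
  rwa [← image_univ]

section Saturation

variable {ι R K M N : Type*} [CommRing R] [Ring K] [Algebra R K] [FaithfulSMul R K]
  [AddCommGroup M] [Module R M] [AddCommGroup N] [Module R N] [Module K N] [IsScalarTower R K N]
  {f : M →ₗ[R] N} {v : ι → M}

theorem span_image_eq_comap_span_of_subset {s t : Set ι} (hst : s ⊆ t)
    (hli : LinearIndepOn K (f ∘ v) t)
    (ht : span R (v '' t) = ((span K (f '' (v '' t))).restrictScalars R).comap f) :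
    span R (v '' s) = ((span K (f '' (v '' s))).restrictScalars R).comap f := by
  refine le_antisymm (span_le.2 ?_) fun x hx => ?_
  · rintro _ ⟨i, hi, rfl⟩
    exact subset_span ⟨v i, ⟨i, hi, rfl⟩, rfl⟩
  have hxt : x ∈ span R (v '' t) := ht ▸ span_mono (image_mono (image_mono hst)) hx
  rw [← union_sdiff_cancel hst, image_union, span_union, mem_sup] at hxt
  obtain ⟨y, hy, z, hz, rfl⟩ := hxt
  rw [← union_sdiff_cancel hst, linearIndepOn_union_iff disjoint_sdiff_right] at hli
  obtain ⟨-, hli_diff, hdisj⟩ := hli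
  have hfz : f z = 0 := by
    have hfy : f y ∈ span K (f '' (v '' s)) :=
      span_le_restrictScalars R K _ (image_span_subset_span f _ ⟨y, hy, rfl⟩)
    refine disjoint_def.1 hdisj (f z) ?_ ?_
    · rw [image_comp]
      simpa using sub_mem hx hfy
    · rw [image_comp]
      exact span_le_restrictScalars R K _ (image_span_subset_span f _ ⟨z, hz, rfl⟩)
  have hz0 : z = 0 := by
    refine disjoint_def.1 (range_ker_disjoint (hli_diff.restrict_scalars' R)) z ?_ hfz
    rwa [← image_eq_range]
  simpa [hz0] using hy

end Saturation

theorem matroidal_iff_maximal_rank_general {Λ : Type*} [AddCommGroup Λ] [Module ℤ Λ] {n : ℕ}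
    (ℓ : Fin n → Module.Dual ℤ Λ) :
    (∀ J : Set (Fin n),
        LinearIndependent ℝ (fun j : J => (1 : ℝ) ⊗ₜ[ℤ] ℓ j.1) →
        LinearIndependent ℤ (fun j : J => ℓ j.1) ∧
          Submodule.span ℤ (ℓ '' J) =
            Submodule.comap (TensorProduct.mk ℤ ℝ (Module.Dual ℤ Λ) 1)
              ((Submodule.span ℝ
                  ((fun x : Module.Dual ℤ Λ => (1 : ℝ) ⊗ₜ[ℤ] x) '' (ℓ '' J))).restrictScalars ℤ)) ↔
    (∀ J : Set (Fin n),
        LinearIndependent ℝ (fun j : J => (1 : ℝ) ⊗ₜ[ℤ] ℓ j.1) →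
        Submodule.span ℝ ((fun x : Module.Dual ℤ Λ => (1 : ℝ) ⊗ₜ[ℤ] x) '' (ℓ '' J)) =
          Submodule.span ℝ (Set.range fun i : Fin n => (1 : ℝ) ⊗ₜ[ℤ] ℓ i) →
        LinearIndependent ℤ (fun j : J => ℓ j.1) ∧
          Submodule.span ℤ (ℓ '' J) =
            Submodule.comap (TensorProduct.mk ℤ ℝ (Module.Dual ℤ Λ) 1)
              ((Submodule.span ℝ
                  ((fun x : Module.Dual ℤ Λ => (1 : ℝ) ⊗ₜ[ℤ] x) '' (ℓ '' J))).restrictScalars ℤ)) := by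
  refine ⟨fun h J hJ _ => h J hJ, fun h J hJ => ⟨?_, ?_⟩⟩
  · exact (hJ.restrict_scalars' ℤ).of_comp (TensorProduct.mk ℤ ℝ _ 1)
  · obtain ⟨J', hJJ', hJ', hspan⟩ :=
      LinearIndepOn.exists_superset_span_eq_span_range (g := fun i => (1 : ℝ) ⊗ₜ[ℤ] ℓ i) hJ
    exact span_image_eq_comap_span_of_subset hJJ' hJ' (h J' hJ' (by rwa [image_image])).2

/-- Let `Λ` be a free `ℤ`-module of finite rank and let `ℓ₁, …, ℓₙ` be primitive nonzero
elements of the dual lattice `Λ^∨ = Hom(Λ, ℤ)`, viewed inside the real vector space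
`Λ^∨ ⊗ ℝ` via `x ↦ 1 ⊗ x`.  Then the following are equivalent:
(i) every `ℝ`-linearly independent subset `{ℓ_j}_{j ∈ J}` is a `ℤ`-basis of the `ℤ`-module
`(ℝ-span of {ℓ_j}_{j ∈ J}) ∩ Λ^∨`;
(ii) every `ℝ`-linearly independent subset of maximal rank is a `ℤ`-basis of the `ℤ`-module
`(ℝ-span of that subset) ∩ Λ^∨`. -/
theorem matroidal_iff_maximal_rank {Λ : Type*} [AddCommGroup Λ] [Module ℤ Λ]
    [Module.Free ℤ Λ] [Module.Finite ℤ Λ] {n : ℕ}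
    (ℓ : Fin n → Module.Dual ℤ Λ)
    (hprim : ∀ i, ℓ i ≠ 0 ∧
      ¬∃ (m : ℤ) (ℓ' : Module.Dual ℤ Λ), 2 ≤ |m| ∧ ℓ i = m • ℓ') :
    (∀ J : Set (Fin n),
        LinearIndependent ℝ (fun j : J => (1 : ℝ) ⊗ₜ[ℤ] ℓ j.1) →
        LinearIndependent ℤ (fun j : J => ℓ j.1) ∧
          Submodule.span ℤ (ℓ '' J) =
            Submodule.comap (TensorProduct.mk ℤ ℝ (Module.Dual ℤ Λ) 1)
              ((Submodule.span ℝ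
                  ((fun x : Module.Dual ℤ Λ => (1 : ℝ) ⊗ₜ[ℤ] x) '' (ℓ '' J))).restrictScalars ℤ)) ↔
    (∀ J : Set (Fin n),
        LinearIndependent ℝ (fun j : J => (1 : ℝ) ⊗ₜ[ℤ] ℓ j.1) →
        Submodule.span ℝ ((fun x : Module.Dual ℤ Λ => (1 : ℝ) ⊗ₜ[ℤ] x) '' (ℓ '' J)) =
          Submodule.span ℝ (Set.range fun i : Fin n => (1 : ℝ) ⊗ₜ[ℤ] ℓ i) →
        LinearIndependent ℤ (fun j : J => ℓ j.1) ∧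
          Submodule.span ℤ (ℓ '' J) =
            Submodule.comap (TensorProduct.mk ℤ ℝ (Module.Dual ℤ Λ) 1)
              ((Submodule.span ℝ
                  ((fun x : Module.Dual ℤ Λ => (1 : ℝ) ⊗ₜ[ℤ] x) '' (ℓ '' J))).restrictScalars ℤ)) :=
  matroidal_iff_maximal_rank_general ℓ
end

section
/- Let Λ be a free ℤ-module of rank g and suppose ℓ₁,…,ℓₙ ∈ Λ^∨ can be extended to a ℤ-basis of Λ^∨ (so n ≤ g). Then there exists a quadratic form Q on Λ^∨ ⊗ ℝ such that: Q is positive definite; Q(ℓ) ∈ ℤ for every ℓ ∈ Λ^∨; Q(ℓ) ≥ 1 for every nonzero ℓ ∈ Λ^∨; and Q(ℓᵢ) = 1 for every i = 1,…,n. (This is the special case of Melo–Viviani's theorem asserting that a matroidal cone generated by at most g rank-one quadratic forms lies in a cone of the perfect cone decomposition, and also in a cone of the central cone decomposition.) -/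
open TensorProduct

/-!
Extend `ℓ₁, …, ℓₙ` to a `ℤ`-basis `B` of `Λ^∨` and take for `Q` the sum of squares of the
coordinates with respect to `B ⊗ 1`, the real basis of `Λ^∨ ⊗ ℝ` obtained from `B` by base
change. It is positive definite and `Q(ℓᵢ) = 1`; on `Λ^∨` its values are sums of squares of
integers, hence integers, and positive integers away from `0`.
-/

namespace Module.Basis

variable {ι R M : Type*} [Fintype ι] [CommRing R] [AddCommGroup M] [Module R M]

noncomputable def sumSquares (b : Basis ι R M) : QuadraticForm R M :=
  (QuadraticMap.weightedSumSquares R (1 : ι → R)).comp b.equivFun.toLinearMap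

theorem sumSquares_apply (b : Basis ι R M) (x : M) :
    b.sumSquares x = ∑ i, b.repr x i * b.repr x i := by
  simp [sumSquares]

theorem sumSquares_self (b : Basis ι R M) (i : ι) : b.sumSquares (b i) = 1 := by
  classical
  simp [sumSquares_apply, Finsupp.single_apply]

theorem sumSquares_posDef [LinearOrder R] [IsStrictOrderedRing R] (b : Basis ι R M) :
    b.sumSquares.PosDef := by
  intro x hx
  rw [sumSquares_apply]
  refine lt_of_le_of_ne (Finset.sum_nonneg fun i _ => mul_self_nonneg _) (Ne.symm ?_)
  rw [Ne, Finset.sum_mul_self_eq_zero_iff]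
  intro h
  exact hx (b.ext_elem fun i => by simpa using h i (Finset.mem_univ i))

theorem sumSquares_baseChange_tmul (S : Type*) [CommRing S] [Algebra R S]
    (b : Basis ι R M) (x : M) :
    (b.baseChange S).sumSquares (1 ⊗ₜ x) = algebraMap R S (b.sumSquares x) := by
  simp [sumSquares_apply, baseChange_repr_tmul, Algebra.smul_def]

end Module.Basis

theorem basis_extension_gives_perfect_central_form_general {Λ : Type*} [AddCommGroup Λ]
    [Module ℤ Λ] {g n : ℕ} (hn : n ≤ g)
    (ℓ : Fin n → Module.Dual ℤ Λ)
    (hext : ∃ B : Module.Basis (Fin g) ℤ (Module.Dual ℤ Λ),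
        ∀ i : Fin n, B (Fin.castLE hn i) = ℓ i) :
    ∃ Q : QuadraticForm ℝ (ℝ ⊗[ℤ] Module.Dual ℤ Λ),
      (∀ x : ℝ ⊗[ℤ] Module.Dual ℤ Λ, x ≠ 0 → 0 < Q x) ∧
      (∀ v : Module.Dual ℤ Λ, ∃ m : ℤ, Q ((1 : ℝ) ⊗ₜ[ℤ] v) = (m : ℝ)) ∧
      (∀ v : Module.Dual ℤ Λ, v ≠ 0 → 1 ≤ Q ((1 : ℝ) ⊗ₜ[ℤ] v)) ∧
      (∀ i : Fin n, Q ((1 : ℝ) ⊗ₜ[ℤ] ℓ i) = 1) := by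
  obtain ⟨B, hB⟩ := hext
  refine ⟨(B.baseChange ℝ).sumSquares, (B.baseChange ℝ).sumSquares_posDef,
    fun v => ⟨B.sumSquares v, ?_⟩, fun v hv => ?_, fun i => ?_⟩
  · rw [Module.Basis.sumSquares_baseChange_tmul, algebraMap_int_eq, eq_intCast]
  · rw [Module.Basis.sumSquares_baseChange_tmul, algebraMap_int_eq, eq_intCast]
    exact_mod_cast B.sumSquares_posDef v hv
  · rw [← hB i, ← Module.Basis.baseChange_apply, Module.Basis.sumSquares_self]

/-- Let `Λ` be a free `ℤ`-module of rank `g` and suppose `ℓ₁, …, ℓₙ ∈ Λ^∨` can be extended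
to a `ℤ`-basis of `Λ^∨` (so `n ≤ g`).  Then there exists a quadratic form `Q` on
`Λ^∨ ⊗ ℝ` that is positive definite, takes integer values on `Λ^∨`, takes values `≥ 1` on
every nonzero element of `Λ^∨`, and takes the value `1` on each `ℓᵢ`.  (This is the special
case of the Melo–Viviani theorem asserting that a matroidal cone generated by at most `g`
rank-one quadratic forms lies in a cone of both the perfect and the central cone
decompositions.) -/
theorem basis_extension_gives_perfect_central_form {Λ : Type*} [AddCommGroup Λ]
    [Module ℤ Λ] {g n : ℕ} (bΛ : Module.Basis (Fin g) ℤ Λ) (hn : n ≤ g)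
    (ℓ : Fin n → Module.Dual ℤ Λ)
    (hext : ∃ B : Module.Basis (Fin g) ℤ (Module.Dual ℤ Λ),
        ∀ i : Fin n, B (Fin.castLE hn i) = ℓ i) :
    ∃ Q : QuadraticForm ℝ (ℝ ⊗[ℤ] Module.Dual ℤ Λ),
      (∀ x : ℝ ⊗[ℤ] Module.Dual ℤ Λ, x ≠ 0 → 0 < Q x) ∧
      (∀ v : Module.Dual ℤ Λ, ∃ m : ℤ, Q ((1 : ℝ) ⊗ₜ[ℤ] v) = (m : ℝ)) ∧
      (∀ v : Module.Dual ℤ Λ, v ≠ 0 → 1 ≤ Q ((1 : ℝ) ⊗ₜ[ℤ] v)) ∧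
      (∀ i : Fin n, Q ((1 : ℝ) ⊗ₜ[ℤ] ℓ i) = 1) :=
  basis_extension_gives_perfect_central_form_general hn ℓ hext
end

section
/- For n ≥ 3, the n(n+1)/2 rank-one symmetric integer matrices ℓℓᵀ, where ℓ ranges over the column vectors 2e₁ − e₂ − ⋯ − eₙ; e₂, …, eₙ; e₁; e₁ − eᵢ for i = 2,…,n; and eᵢ − eⱼ for 2 ≤ i < j ≤ n with (i,j) ≠ (2,3), form a ℤ-basis of the lattice of all symmetric n×n integer matrices. (Hence the Friedman–Smith monodromy cone is a basic cone for n ≥ 3.) -/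
/-- The lattice of symmetric `n × n` integer matrices, as a `ℤ`-submodule of all
`n × n` integer matrices (a free `ℤ`-module of rank `n(n+1)/2`). -/
def symMatrixLattice (n : ℕ) : Submodule ℤ (Matrix (Fin n) (Fin n) ℤ) where
  carrier := {M | M.IsSymm}
  add_mem' := fun ha hb => Matrix.IsSymm.add ha hb
  zero_mem' := Matrix.isSymm_zero
  smul_mem' := fun c _ hM => Matrix.IsSymm.smul hM c

/-- The rank-one symmetric matrix `ℓℓᵀ` associated to a vector `ℓ ∈ ℤⁿ`, as an element of
the lattice of symmetric `n × n` integer matrices. -/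
def rankOneSym (n : ℕ) (ℓ : Fin n → ℤ) : symMatrixLattice n :=
  ⟨Matrix.vecMulVec ℓ ℓ, by
    show Matrix.transpose (Matrix.vecMulVec ℓ ℓ) = Matrix.vecMulVec ℓ ℓ
    ext i j
    simp [Matrix.vecMulVec_apply, mul_comm]⟩

/-- The `n(n+1)/2` vectors (with `0`-based indices): `2e₁ − e₂ − ⋯ − eₙ`; `e₂, …, eₙ`;
`e₁`; `e₁ − eᵢ` for `i = 2, …, n`; and `eᵢ − eⱼ` for `2 ≤ i < j ≤ n` with `(i,j) ≠ (2,3)`. -/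
def fsBasisVectors (n : ℕ) : Set (Fin n → ℤ) :=
  {fun k => if k.val = 0 then 2 else -1} ∪
    {v | ∃ i : Fin n, i.val ≠ 0 ∧ v = Pi.single i 1} ∪
    {v | ∃ j : Fin n, j.val = 0 ∧ v = Pi.single j 1} ∪
    {v | ∃ i j : Fin n, j.val = 0 ∧ i.val ≠ 0 ∧ v = Pi.single j 1 - Pi.single i 1} ∪
    {v | ∃ i j : Fin n, i.val ≠ 0 ∧ i < j ∧ ¬(i.val = 1 ∧ j.val = 2) ∧
          v = Pi.single i 1 - Pi.single j 1}

namespace FS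
open Finset

variable {n : ℕ}
def v0 (n : ℕ) : Fin n → ℤ := fun k => if k.val = 0 then 2 else -1

lemma v0_apply_eq {k : Fin n} (h : (k : ℕ) = 0) : v0 n k = 2 := if_pos h
lemma v0_apply_ne {k : Fin n} (h : (k : ℕ) ≠ 0) : v0 n k = -1 := if_neg h
lemma sp (i a : Fin n) : (Pi.single i 1 : Fin n → ℤ) a = if a = i then 1 else 0 :=
  Pi.single_apply i 1 a
lemma sp_self (i : Fin n) : (Pi.single i 1 : Fin n → ℤ) i = 1 := Pi.single_eq_same i 1
lemma sp_ne {i a : Fin n} (h : a ≠ i) : (Pi.single i 1 : Fin n → ℤ) a = 0 := by rw [sp, if_neg h]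

lemma single_inj {a b : Fin n} (h : (Pi.single a 1 : Fin n → ℤ) = Pi.single b 1) : a = b := by
  have h1 := congrFun h a
  rw [sp_self, sp] at h1
  split_ifs at h1 with hh
  · exact hh
  · omega

lemma card_pairs (n : ℕ) :
    (Finset.univ.filter (fun p : Fin n × Fin n => p.1 < p.2)).card * 2 = n * (n-1) := by
  rw [Finset.card_filter]
  rw [← Finset.univ_product_univ, Finset.sum_product]
  have h1 : ∀ i : Fin n, (∑ j : Fin n, if i < j then (1:ℕ) else 0) = n - 1 - i.val := by
    intro i
    rw [← Finset.card_filter]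
    have : Finset.univ.filter (fun j : Fin n => i < j) = Finset.Ioi i := by ext j; simp
    rw [this, Fin.card_Ioi]
  simp only [h1]
  rw [Fin.sum_univ_eq_sum_range (fun k => n - 1 - k)]
  rw [← Finset.sum_range_reflect]
  have h2 : ∀ j ∈ Finset.range n, n - 1 - (n - 1 - j) = j := by
    intro j hj; rw [Finset.mem_range] at hj; omega
  rw [Finset.sum_congr rfl h2]
  rw [Finset.sum_range_id_mul_two]

lemma card_fs (n : ℕ) (hn : 3 ≤ n) :
    Nat.card (fsBasisVectors n) = n * (n + 1) / 2 := by
  classical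
  set i0 : Fin n := ⟨0, by omega⟩ with hi0
  set S1 : Set (Fin n → ℤ) := {v0 n} with hS1
  set S2 : Set (Fin n → ℤ) := {v | ∃ i : Fin n, i.val ≠ 0 ∧ v = Pi.single i 1} with hS2
  set S3 : Set (Fin n → ℤ) := {v | ∃ j : Fin n, j.val = 0 ∧ v = Pi.single j 1} with hS3
  set S4 : Set (Fin n → ℤ) :=
    {v | ∃ i j : Fin n, j.val = 0 ∧ i.val ≠ 0 ∧ v = Pi.single j 1 - Pi.single i 1} with hS4
  set S5 : Set (Fin n → ℤ) :=
    {v | ∃ i j : Fin n, i.val ≠ 0 ∧ i < j ∧ ¬(i.val = 1 ∧ j.val = 2) ∧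
          v = Pi.single i 1 - Pi.single j 1} with hS5
  have hfs : fsBasisVectors n = (((S1 ∪ S2) ∪ S3) ∪ S4) ∪ S5 := rfl
  have e2 : S2 = (fun i : Fin n => Pi.single i (1:ℤ)) '' {i | i.val ≠ 0} := by
    ext v; simp only [hS2, Set.mem_setOf_eq, Set.mem_image]
    constructor
    · rintro ⟨i, hi, rfl⟩; exact ⟨i, hi, rfl⟩
    · rintro ⟨i, hi, rfl⟩; exact ⟨i, hi, rfl⟩
  have e3 : S3 = {Pi.single i0 (1:ℤ)} := by
    ext v; simp only [hS3, Set.mem_setOf_eq, Set.mem_singleton_iff]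
    constructor
    · rintro ⟨j, hj, rfl⟩
      have : j = i0 := Fin.ext hj
      rw [this]
    · rintro rfl; exact ⟨i0, rfl, rfl⟩
  have e4 : S4 = (fun i : Fin n => Pi.single i0 (1:ℤ) - Pi.single i 1) '' {i | i.val ≠ 0} := by
    ext v; simp only [hS4, Set.mem_setOf_eq, Set.mem_image]
    constructor
    · rintro ⟨i, j, hj, hi, rfl⟩
      have : j = i0 := Fin.ext hj
      exact ⟨i, hi, by rw [this]⟩
    · rintro ⟨i, hi, rfl⟩; exact ⟨i, i0, rfl, hi, rfl⟩
  have e5 : S5 = (fun p : Fin n × Fin n => Pi.single p.1 (1:ℤ) - Pi.single p.2 1) ''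
      {p | p.1.val ≠ 0 ∧ p.1 < p.2 ∧ ¬(p.1.val = 1 ∧ p.2.val = 2)} := by
    ext v; simp only [hS5, Set.mem_setOf_eq, Set.mem_image]
    constructor
    · rintro ⟨i, j, h1, h2, h3, rfl⟩; exact ⟨(i,j), ⟨h1, h2, h3⟩, rfl⟩
    · rintro ⟨⟨i,j⟩, ⟨h1, h2, h3⟩, rfl⟩; exact ⟨i, j, h1, h2, h3, rfl⟩
  have f1 : S1.Finite := Set.finite_singleton _
  have f2 : S2.Finite := by rw [e2]; exact (Set.toFinite _).image _
  have f3 : S3.Finite := by rw [e3]; exact Set.finite_singleton _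
  have f4 : S4.Finite := by rw [e4]; exact (Set.toFinite _).image _
  have f5 : S5.Finite := by rw [e5]; exact (Set.toFinite _).image _
  have hcard0 : {i : Fin n | i.val ≠ 0}.ncard = n - 1 := by
    have hs : {i : Fin n | i.val ≠ 0} =
        (Finset.univ.filter (fun i : Fin n => i.val ≠ 0) : Finset (Fin n)) := by
      ext i; simp
    rw [hs, Set.ncard_coe_finset]
    have h := Finset.card_filter_add_card_filter_not (s := (Finset.univ : Finset (Fin n)))
      (p := fun i : Fin n => i.val = 0)
    have hone : (Finset.univ.filter (fun i : Fin n => i.val = 0)).card = 1 := by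
      have hfe : Finset.univ.filter (fun i : Fin n => i.val = 0) = {i0} := by
        ext i; simp only [Finset.mem_filter, Finset.mem_univ, true_and, Finset.mem_singleton]
        constructor
        · intro h; exact Fin.ext h
        · rintro rfl; rfl
      rw [hfe, Finset.card_singleton]
    simp only [Finset.card_univ, Fintype.card_fin] at h
    have h2 : (Finset.univ.filter (fun i : Fin n => ¬ i.val = 0)).card = n - 1 := by omega
    convert h2 using 2
  have c1 : S1.ncard = 1 := Set.ncard_singleton _
  have c2 : S2.ncard = n - 1 := by
    rw [e2, Set.ncard_image_of_injOn, hcard0]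
    intro a _ b _ hab
    exact single_inj hab
  have c3 : S3.ncard = 1 := by rw [e3]; exact Set.ncard_singleton _
  have c4 : S4.ncard = n - 1 := by
    rw [e4, Set.ncard_image_of_injOn, hcard0]
    intro a _ b _ hab
    exact single_inj (sub_right_injective hab)
  have c5 : S5.ncard * 2 = n*(n-1) - 2*(n-1) - 2 := by
    rw [e5, Set.ncard_image_of_injOn]
    · have hset : {p : Fin n × Fin n | p.1.val ≠ 0 ∧ p.1 < p.2 ∧ ¬(p.1.val = 1 ∧ p.2.val = 2)} =
          (Finset.univ.filter (fun p : Fin n × Fin n =>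
            p.1.val ≠ 0 ∧ p.1 < p.2 ∧ ¬(p.1.val = 1 ∧ p.2.val = 2)) : Finset (Fin n × Fin n)) := by
        ext p; simp
      rw [hset, Set.ncard_coe_finset]
      set q : Fin n × Fin n := (⟨1, by omega⟩, ⟨2, by omega⟩) with hq
      set T : Finset (Fin n × Fin n) :=
        Finset.univ.filter (fun p : Fin n × Fin n => p.1.val ≠ 0 ∧ p.1 < p.2) with hT
      have hflt : Finset.univ.filter (fun p : Fin n × Fin n =>
          p.1.val ≠ 0 ∧ p.1 < p.2 ∧ ¬(p.1.val = 1 ∧ p.2.val = 2)) = T.erase q := by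
        ext p
        simp only [hT, Finset.mem_erase, Finset.mem_filter, Finset.mem_univ, true_and]
        constructor
        · rintro ⟨h1, h2, h3⟩
          refine ⟨?_, h1, h2⟩
          intro hpq; apply h3; rw [hpq]; exact ⟨rfl, rfl⟩
        · rintro ⟨hne, h1, h2⟩
          refine ⟨h1, h2, ?_⟩
          rintro ⟨ha, hb⟩
          exact hne (Prod.ext (Fin.ext ha) (Fin.ext hb))
      rw [hflt]
      have hqT : q ∈ T := by
        simp only [hT, Finset.mem_filter, Finset.mem_univ, true_and, hq]
        refine ⟨by simp, ?_⟩
        rw [Fin.lt_def]; simp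
      rw [Finset.card_erase_of_mem hqT]
      have hT2 : T.card + (n-1) = (Finset.univ.filter (fun p : Fin n × Fin n => p.1 < p.2)).card := by
        have hsplit := Finset.card_filter_add_card_filter_not
          (s := Finset.univ.filter (fun p : Fin n × Fin n => p.1 < p.2))
          (p := fun p : Fin n × Fin n => p.1.val ≠ 0)
        have hTeq : (Finset.univ.filter (fun p : Fin n × Fin n => p.1 < p.2)).filter
            (fun p => p.1.val ≠ 0) = T := by
          ext p; simp only [hT, Finset.mem_filter, Finset.mem_univ, true_and]; tauto
        have hzero : ((Finset.univ.filter (fun p : Fin n × Fin n => p.1 < p.2)).filter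
            (fun p => ¬ p.1.val ≠ 0)).card = n - 1 := by
          have himg : (Finset.univ.filter (fun p : Fin n × Fin n => p.1 < p.2)).filter
              (fun p => ¬ p.1.val ≠ 0) =
              (Finset.univ.filter (fun j : Fin n => i0 < j)).image (fun j => (i0, j)) := by
            ext p
            simp only [Finset.mem_filter, Finset.mem_univ, true_and, Finset.mem_image,
              not_not]
            constructor
            · rintro ⟨h1, h2⟩
              exact ⟨p.2, by rwa [show i0 = p.1 from (Fin.ext h2).symm], by
                rw [show i0 = p.1 from (Fin.ext h2).symm]⟩
            · rintro ⟨j, hj, rfl⟩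
              exact ⟨hj, rfl⟩
          rw [himg, Finset.card_image_of_injective _ (by intro a b h; simpa using h)]
          have hIoi : Finset.univ.filter (fun j : Fin n => i0 < j) = Finset.Ioi i0 := by
            ext j; simp
          rw [hIoi, Fin.card_Ioi]
          have : (i0 : ℕ) = 0 := rfl
          omega
        rw [hTeq, hzero] at hsplit
        omega
      have hpc := card_pairs n
      omega
    · rintro ⟨a, b⟩ ⟨ha, hab, -⟩ ⟨c, d⟩ ⟨hc, hcd, -⟩ h
      simp only at h ha hab hc hcd
      have hab' : a ≠ b := ne_of_lt hab
      have hcd' : c ≠ d := ne_of_lt hcd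
      have h1 := congrFun h a
      have h2 := congrFun h b
      rw [Pi.sub_apply, Pi.sub_apply, sp_self, sp_ne hab'] at h1
      rw [Pi.sub_apply, Pi.sub_apply, sp_ne (Ne.symm hab'), sp_self] at h2
      have hac : a = c := by
        rcases eq_or_ne a c with h' | h'
        · exact h'
        · exfalso
          rw [sp_ne h'] at h1
          rw [sp] at h1
          split_ifs at h1 <;> omega
      subst hac
      have hbd : b = d := by
        rcases eq_or_ne b d with h' | h'
        · exact h'
        · exfalso
          rw [sp_ne h'] at h2
          rw [sp] at h2
          split_ifs at h2 <;> omega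
      rw [hbd]
  -- disjointness
  have d12 : Disjoint S1 S2 := by
    rw [Set.disjoint_left]
    rintro a rfl ⟨i, hi, hv⟩
    have h := congrFun hv i
    rw [v0_apply_ne hi, sp_self] at h
    norm_num at h
  have d3 : Disjoint (S1 ∪ S2) S3 := by
    rw [Set.disjoint_left]
    rintro a (rfl | ⟨i, hi, rfl⟩) ⟨j, hj, hv⟩
    · have h := congrFun hv j
      rw [v0_apply_eq hj, sp_self] at h
      norm_num at h
    · have h := congrFun hv j
      rw [sp_ne (Fin.ne_of_val_ne (by omega)), sp_self] at h
      norm_num at h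
  have d4 : Disjoint ((S1 ∪ S2) ∪ S3) S4 := by
    rw [Set.disjoint_left]
    rintro a ((rfl | ⟨i, hi, rfl⟩) | ⟨j, hj, rfl⟩) ⟨i', j', hj', hi', hv⟩
    · have h := congrFun hv j'
      rw [v0_apply_eq hj', Pi.sub_apply, sp_self,
        sp_ne (Fin.ne_of_val_ne (by omega : (j' : ℕ) ≠ (i' : ℕ)))] at h
      norm_num at h
    · have h := congrFun hv i'
      rw [Pi.sub_apply, sp_ne (Fin.ne_of_val_ne (by omega : (i' : ℕ) ≠ (j' : ℕ))),
        sp_self, sp] at h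
      split_ifs at h <;> omega
    · have h := congrFun hv i'
      rw [Pi.sub_apply, sp_ne (Fin.ne_of_val_ne (by omega : (i' : ℕ) ≠ (j' : ℕ))),
        sp_self, sp_ne (Fin.ne_of_val_ne (by omega : (i' : ℕ) ≠ (j : ℕ)))] at h
      norm_num at h
  have d5 : Disjoint (((S1 ∪ S2) ∪ S3) ∪ S4) S5 := by
    rw [Set.disjoint_left]
    rintro a (((rfl | ⟨i, hi, rfl⟩) | ⟨j, hj, rfl⟩) | ⟨i', j', hj', hi', rfl⟩)
      ⟨k, m, hk, hkm, -, hv⟩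
    · have h := congrFun hv k
      rw [v0_apply_ne hk, Pi.sub_apply, sp_self, sp_ne (ne_of_lt hkm)] at h
      norm_num at h
    · have h := congrFun hv m
      rw [Pi.sub_apply, sp_ne (Ne.symm (ne_of_lt hkm)), sp_self, sp] at h
      split_ifs at h <;> omega
    · have h := congrFun hv m
      rw [Pi.sub_apply, sp_ne (Ne.symm (ne_of_lt hkm)), sp_self, sp] at h
      split_ifs at h <;> omega
    · have hm : (m : ℕ) ≠ 0 := by
        have := hkm; rw [Fin.lt_def] at this; omega
      have h := congrFun hv j'
      rw [Pi.sub_apply, Pi.sub_apply, sp_self,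
        sp_ne (Fin.ne_of_val_ne (by omega : (j' : ℕ) ≠ (i' : ℕ))),
        sp_ne (Fin.ne_of_val_ne (by omega : (j' : ℕ) ≠ (k : ℕ))),
        sp_ne (Fin.ne_of_val_ne (by omega : (j' : ℕ) ≠ (m : ℕ)))] at h
      norm_num at h
  rw [Nat.card_coe_set_eq, hfs]
  rw [Set.ncard_union_eq d5 (((f1.union f2).union f3).union f4) f5]
  rw [Set.ncard_union_eq d4 ((f1.union f2).union f3) f4]
  rw [Set.ncard_union_eq d3 (f1.union f2) f3]
  rw [Set.ncard_union_eq d12 f1 f2]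
  rw [c1, c2, c3, c4]
  have hnn : n * (n+1) = n * (n-1) + 2*n := by
    obtain ⟨m, rfl⟩ : ∃ m, n = m + 3 := ⟨n - 3, by omega⟩
    have h' : m + 3 - 1 = m + 2 := rfl
    rw [h']; ring
  have hge : 2*n ≤ n * (n-1) := by
    calc 2*n ≤ (n-1) * n := Nat.mul_le_mul_right n (by omega)
    _ = n * (n-1) := Nat.mul_comm _ _
  omega



lemma v0_apply (k : Fin n) : v0 n k = if (k : ℕ) = 0 then 2 else -1 := rfl

lemma v0_mem : v0 n ∈ fsBasisVectors n := Or.inl (Or.inl (Or.inl (Or.inl rfl)))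

lemma singleNe_mem {i : Fin n} (hi : i.val ≠ 0) : Pi.single i 1 ∈ fsBasisVectors n :=
  Or.inl (Or.inl (Or.inl (Or.inr ⟨i, hi, rfl⟩)))

lemma single0_mem {j : Fin n} (hj : j.val = 0) : Pi.single j 1 ∈ fsBasisVectors n :=
  Or.inl (Or.inl (Or.inr ⟨j, hj, rfl⟩))

lemma diff0_mem {i j : Fin n} (hj : j.val = 0) (hi : i.val ≠ 0) :
    Pi.single j 1 - Pi.single i 1 ∈ fsBasisVectors n :=
  Or.inl (Or.inr ⟨i, j, hj, hi, rfl⟩)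

lemma diff_mem {i j : Fin n} (hi : i.val ≠ 0) (hij : i < j) (h12 : ¬(i.val = 1 ∧ j.val = 2)) :
    Pi.single i 1 - Pi.single j 1 ∈ fsBasisVectors n :=
  Or.inr ⟨i, j, hi, hij, h12, rfl⟩

def Dm (i : Fin n) : Matrix (Fin n) (Fin n) ℤ := Matrix.single i i 1
def Sm (i j : Fin n) : Matrix (Fin n) (Fin n) ℤ :=
  Matrix.single i j 1 + Matrix.single j i 1

lemma std_apply (i j a b : Fin n) :
    Matrix.single i j (1:ℤ) a b = if i = a ∧ j = b then 1 else 0 := by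
  simp [Matrix.single]

lemma Dm_apply (i a b : Fin n) : Dm i a b = if i = a ∧ i = b then 1 else 0 := std_apply i i a b
lemma Sm_apply (i j a b : Fin n) :
    Sm i j a b = (if i = a ∧ j = b then 1 else 0) + (if j = a ∧ i = b then 1 else 0) := by
  simp [Sm, Matrix.add_apply, std_apply]

def DL (i : Fin n) : symMatrixLattice n :=
  ⟨Dm i, by
    show Matrix.transpose _ = _
    ext a b
    simp only [Matrix.transpose_apply, Dm_apply]
    split_ifs with h1 h2 h2 <;> first | rfl | (exfalso; tauto)⟩

def SL (i j : Fin n) : symMatrixLattice n :=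
  ⟨Sm i j, by
    show Matrix.transpose _ = _
    ext a b
    simp only [Matrix.transpose_apply, Sm_apply]
    split_ifs <;> first | rfl | omega | (exfalso; tauto)⟩

lemma rank_single (i : Fin n) : rankOneSym n (Pi.single i 1) = DL i := by
  apply Subtype.ext
  show Matrix.vecMulVec _ _ = Dm i
  ext a b
  rw [Matrix.vecMulVec_apply, sp, sp, Dm_apply]
  split_ifs <;> first | rfl | omega | (exfalso; tauto) | norm_num | tauto

lemma rank_diff {i j : Fin n} (hij : i ≠ j) :
    rankOneSym n (Pi.single i 1 - Pi.single j 1) = DL i + DL j - SL i j := by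
  apply Subtype.ext
  show Matrix.vecMulVec _ _ = Dm i + Dm j - Sm i j
  ext a b
  rw [Matrix.vecMulVec_apply, Matrix.sub_apply, Matrix.add_apply,
    Pi.sub_apply, Pi.sub_apply, sp, sp, sp, sp, Dm_apply, Dm_apply, Sm_apply]
  by_cases hai : a = i <;> by_cases haj : a = j <;> by_cases hbi : b = i <;>
    by_cases hbj : b = j <;> simp_all <;> omega

lemma Dm_zero {i a b : Fin n} (h : ¬(i = a ∧ i = b)) : Dm i a b = 0 := by
  rw [Dm_apply, if_neg h]
lemma Sm_zero {i j a b : Fin n} (h1 : ¬(i = a ∧ j = b)) (h2 : ¬(j = a ∧ i = b)) :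
    Sm i j a b = 0 := by
  rw [Sm_apply, if_neg h1, if_neg h2]; ring
lemma vne {a b : Fin n} (h : (a:ℕ) ≠ (b:ℕ)) : a ≠ b := Fin.ne_of_val_ne h

lemma rank_v0 (hn : 3 ≤ n) :
    rankOneSym n (v0 n) = (4:ℤ) • DL (⟨0, by omega⟩ : Fin n)
      + (∑ k ∈ Finset.univ.filter (fun k : Fin n => k.val ≠ 0),
          ((-2:ℤ) • SL (⟨0, by omega⟩ : Fin n) k + DL k))
      + ∑ p ∈ Finset.univ.filter (fun p : Fin n × Fin n => p.1.val ≠ 0 ∧ p.1 < p.2),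
          SL p.1 p.2 := by
  set i0 : Fin n := ⟨0, by omega⟩ with hi0
  apply Subtype.ext
  show Matrix.vecMulVec (v0 n) (v0 n) = _
  have hco : (((4:ℤ) • DL i0
      + (∑ k ∈ Finset.univ.filter (fun k : Fin n => k.val ≠ 0),
          ((-2:ℤ) • SL i0 k + DL k))
      + ∑ p ∈ Finset.univ.filter (fun p : Fin n × Fin n => p.1.val ≠ 0 ∧ p.1 < p.2),
          SL p.1 p.2 : symMatrixLattice n) : Matrix (Fin n) (Fin n) ℤ)
      = (4:ℤ) • Dm i0
      + (∑ k ∈ Finset.univ.filter (fun k : Fin n => k.val ≠ 0),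
          ((-2:ℤ) • Sm i0 k + Dm k))
      + ∑ p ∈ Finset.univ.filter (fun p : Fin n × Fin n => p.1.val ≠ 0 ∧ p.1 < p.2),
          Sm p.1 p.2 := by
    push_cast [AddSubmonoidClass.coe_finset_sum]
    rfl
  rw [hco]
  ext a b
  simp only [Matrix.add_apply, Matrix.smul_apply, Matrix.sum_apply, Matrix.vecMulVec_apply,
    smul_eq_mul]
  have hval0 : (i0 : ℕ) = 0 := rfl
  rw [v0_apply, v0_apply]
  by_cases ha : (a : ℕ) = 0 <;> by_cases hb : (b : ℕ) = 0
  · rw [if_pos ha, if_pos hb]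
    have hs1 : (∑ k ∈ Finset.univ.filter (fun k : Fin n => k.val ≠ 0),
        ((-2:ℤ) * Sm i0 k a b + Dm k a b)) = 0 := by
      apply Finset.sum_eq_zero
      intro k hk
      rw [Finset.mem_filter] at hk
      rw [Sm_zero (by rintro ⟨-, h2⟩; exact (vne (by omega) : k ≠ b) h2)
          (by rintro ⟨h1, -⟩; exact (vne (by omega) : k ≠ a) h1),
        Dm_zero (by rintro ⟨h1, -⟩; exact (vne (by omega) : k ≠ a) h1)]
      ring
    have hs2 : (∑ p ∈ Finset.univ.filter
        (fun p : Fin n × Fin n => p.1.val ≠ 0 ∧ p.1 < p.2), Sm p.1 p.2 a b) = 0 := by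
      apply Finset.sum_eq_zero
      intro p hp
      rw [Finset.mem_filter, Fin.lt_def] at hp
      refine Sm_zero ?_ ?_
      · rintro ⟨h1, -⟩; exact (vne (by omega) : p.1 ≠ a) h1
      · rintro ⟨-, h2⟩; exact (vne (by omega) : p.1 ≠ b) h2
    rw [hs1, hs2, Dm_apply,
      if_pos ⟨(Fin.ext (by omega) : i0 = a), (Fin.ext (by omega) : i0 = b)⟩]
    ring
  · rw [if_pos ha, if_neg hb]
    have hs1 : (∑ k ∈ Finset.univ.filter (fun k : Fin n => k.val ≠ 0),
        ((-2:ℤ) * Sm i0 k a b + Dm k a b)) = -2 := by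
      rw [Finset.sum_eq_single_of_mem b (by simp [Finset.mem_filter, hb])]
      · have hSm : Sm i0 b a b = 1 := by
          rw [Sm_apply, if_pos ⟨(Fin.ext (by omega) : i0 = a), rfl⟩,
            if_neg (by rintro ⟨h1, -⟩; exact (vne (by omega) : b ≠ a) h1)]
          ring
        rw [hSm, Dm_zero (by rintro ⟨h1, -⟩; exact (vne (by omega) : b ≠ a) h1)]
        ring
      · intro k hk hkb
        rw [Finset.mem_filter] at hk
        rw [Sm_zero (by rintro ⟨-, h2⟩; exact hkb h2)
            (by rintro ⟨h1, -⟩; exact (vne (by omega) : k ≠ a) h1),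
          Dm_zero (by rintro ⟨h1, -⟩; exact (vne (by omega) : k ≠ a) h1)]
        ring
    have hs2 : (∑ p ∈ Finset.univ.filter
        (fun p : Fin n × Fin n => p.1.val ≠ 0 ∧ p.1 < p.2), Sm p.1 p.2 a b) = 0 := by
      apply Finset.sum_eq_zero
      intro p hp
      rw [Finset.mem_filter, Fin.lt_def] at hp
      refine Sm_zero ?_ ?_
      · rintro ⟨h1, -⟩; exact (vne (by omega) : p.1 ≠ a) h1
      · rintro ⟨h1, -⟩; exact (vne (by omega) : p.2 ≠ a) h1
    rw [hs1, hs2, Dm_zero (by rintro ⟨-, h2⟩; exact (vne (by omega) : i0 ≠ b) h2)]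
    ring
  · rw [if_neg ha, if_pos hb]
    have hs1 : (∑ k ∈ Finset.univ.filter (fun k : Fin n => k.val ≠ 0),
        ((-2:ℤ) * Sm i0 k a b + Dm k a b)) = -2 := by
      rw [Finset.sum_eq_single_of_mem a (by simp [Finset.mem_filter, ha])]
      · have hSm : Sm i0 a a b = 1 := by
          rw [Sm_apply, if_neg (by rintro ⟨h1, -⟩; exact (vne (by omega) : i0 ≠ a) h1),
            if_pos ⟨rfl, (Fin.ext (by omega) : i0 = b)⟩]
          ring
        rw [hSm, Dm_zero (by rintro ⟨-, h2⟩; exact (vne (by omega) : a ≠ b) h2)]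
        ring
      · intro k hk hka
        rw [Finset.mem_filter] at hk
        rw [Sm_zero (by rintro ⟨-, h2⟩; exact (vne (by omega) : k ≠ b) h2)
            (by rintro ⟨h1, -⟩; exact hka h1),
          Dm_zero (by rintro ⟨-, h2⟩; exact (vne (by omega) : k ≠ b) h2)]
        ring
    have hs2 : (∑ p ∈ Finset.univ.filter
        (fun p : Fin n × Fin n => p.1.val ≠ 0 ∧ p.1 < p.2), Sm p.1 p.2 a b) = 0 := by
      apply Finset.sum_eq_zero
      intro p hp
      rw [Finset.mem_filter, Fin.lt_def] at hp
      refine Sm_zero ?_ ?_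
      · rintro ⟨-, h2⟩; exact (vne (by omega) : p.2 ≠ b) h2
      · rintro ⟨-, h2⟩; exact (vne (by omega) : p.1 ≠ b) h2
    rw [hs1, hs2, Dm_zero (by rintro ⟨h1, -⟩; exact (vne (by omega) : i0 ≠ a) h1)]
    ring
  · rw [if_neg ha, if_neg hb]
    rw [Dm_zero (by rintro ⟨h1, -⟩; exact (vne (by omega) : i0 ≠ a) h1)]
    rcases lt_trichotomy a b with hab | hab | hab
    · have hs1 : (∑ k ∈ Finset.univ.filter (fun k : Fin n => k.val ≠ 0),
          ((-2:ℤ) * Sm i0 k a b + Dm k a b)) = 0 := by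
        apply Finset.sum_eq_zero
        intro k hk
        rw [Finset.mem_filter] at hk
        have hab' : a ≠ b := ne_of_lt hab
        rw [Sm_zero (by rintro ⟨h1, -⟩; exact (vne (by omega) : i0 ≠ a) h1)
            (by rintro ⟨-, h2⟩; exact (vne (by omega) : i0 ≠ b) h2),
          Dm_zero (by rintro ⟨h1, h2⟩; exact hab' (h1 ▸ h2 ▸ rfl))]
        ring
      have hs2 : (∑ p ∈ Finset.univ.filter
          (fun p : Fin n × Fin n => p.1.val ≠ 0 ∧ p.1 < p.2), Sm p.1 p.2 a b) = 1 := by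
        rw [Finset.sum_eq_single_of_mem (a, b)
          (by simp only [Finset.mem_filter, Finset.mem_univ, true_and]; exact ⟨ha, hab⟩)]
        · rw [Sm_apply, if_pos ⟨rfl, rfl⟩, if_neg (by
            rintro ⟨h1, -⟩
            have e1 : (b:ℕ) = (a:ℕ) := congrArg Fin.val h1
            rw [Fin.lt_def] at hab
            omega)]
          ring
        · intro p hp hne
          rw [Finset.mem_filter, Fin.lt_def] at hp
          refine Sm_zero ?_ ?_
          · rintro ⟨h1, h2⟩; exact hne (Prod.ext h1 h2)
          · rintro ⟨h1, h2⟩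
            have e1 : (p.2:ℕ) = (a:ℕ) := congrArg Fin.val h1
            have e2 : (p.1:ℕ) = (b:ℕ) := congrArg Fin.val h2
            rw [Fin.lt_def] at hab
            omega
      rw [hs1, hs2]; ring
    · have hs1 : (∑ k ∈ Finset.univ.filter (fun k : Fin n => k.val ≠ 0),
          ((-2:ℤ) * Sm i0 k a b + Dm k a b)) = 1 := by
        rw [Finset.sum_eq_single_of_mem a (by simp [Finset.mem_filter, ha])]
        · rw [Sm_zero (by rintro ⟨h1, -⟩; exact (vne (by omega) : i0 ≠ a) h1)
              (by rintro ⟨-, h2⟩; exact (vne (by omega) : i0 ≠ b) h2),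
            Dm_apply, if_pos ⟨rfl, hab⟩]
          ring
        · intro k hk hka
          rw [Finset.mem_filter] at hk
          rw [Sm_zero (by rintro ⟨h1, -⟩; exact (vne (by omega) : i0 ≠ a) h1)
              (by rintro ⟨-, h2⟩; exact (vne (by omega) : i0 ≠ b) h2),
            Dm_zero (by rintro ⟨h1, -⟩; exact hka h1)]
          ring
      have hs2 : (∑ p ∈ Finset.univ.filter
          (fun p : Fin n × Fin n => p.1.val ≠ 0 ∧ p.1 < p.2), Sm p.1 p.2 a b) = 0 := by
        apply Finset.sum_eq_zero
        intro p hp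
        rw [Finset.mem_filter, Fin.lt_def] at hp
        subst hab
        refine Sm_zero ?_ ?_
        · rintro ⟨h1, h2⟩
          have e1 : (p.1:ℕ) = (a:ℕ) := congrArg Fin.val h1
          have e2 : (p.2:ℕ) = (a:ℕ) := congrArg Fin.val h2
          omega
        · rintro ⟨h1, h2⟩
          have e1 : (p.2:ℕ) = (a:ℕ) := congrArg Fin.val h1
          have e2 : (p.1:ℕ) = (a:ℕ) := congrArg Fin.val h2
          omega
      rw [hs1, hs2]; ring
    · have hs1 : (∑ k ∈ Finset.univ.filter (fun k : Fin n => k.val ≠ 0),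
          ((-2:ℤ) * Sm i0 k a b + Dm k a b)) = 0 := by
        apply Finset.sum_eq_zero
        intro k hk
        rw [Finset.mem_filter] at hk
        have hab' : a ≠ b := (ne_of_lt hab).symm
        rw [Sm_zero (by rintro ⟨h1, -⟩; exact (vne (by omega) : i0 ≠ a) h1)
            (by rintro ⟨-, h2⟩; exact (vne (by omega) : i0 ≠ b) h2),
          Dm_zero (by rintro ⟨h1, h2⟩; exact hab' (h1 ▸ h2 ▸ rfl))]
        ring
      have hs2 : (∑ p ∈ Finset.univ.filter
          (fun p : Fin n × Fin n => p.1.val ≠ 0 ∧ p.1 < p.2), Sm p.1 p.2 a b) = 1 := by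
        rw [Finset.sum_eq_single_of_mem (b, a)
          (by simp only [Finset.mem_filter, Finset.mem_univ, true_and]; exact ⟨hb, hab⟩)]
        · rw [Sm_apply, if_neg (by
            rintro ⟨h1, -⟩
            have e1 : (b:ℕ) = (a:ℕ) := congrArg Fin.val h1
            rw [Fin.lt_def] at hab
            omega), if_pos ⟨rfl, rfl⟩]
          ring
        · intro p hp hne
          rw [Finset.mem_filter, Fin.lt_def] at hp
          refine Sm_zero ?_ ?_
          · rintro ⟨h1, h2⟩
            have e1 : (p.1:ℕ) = (a:ℕ) := congrArg Fin.val h1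
            have e2 : (p.2:ℕ) = (b:ℕ) := congrArg Fin.val h2
            rw [Fin.lt_def] at hab
            omega
          · rintro ⟨h1, h2⟩; exact hne (Prod.ext h2 h1)
      rw [hs1, hs2]; ring


lemma sym_decomp (M : Matrix (Fin n) (Fin n) ℤ) (hM : M.IsSymm) :
    (⟨M, hM⟩ : symMatrixLattice n) = (∑ i : Fin n, M i i • DL i)
      + ∑ p ∈ Finset.univ.filter (fun p : Fin n × Fin n => p.1 < p.2),
          M p.1 p.2 • SL p.1 p.2 := by
  apply Subtype.ext
  have hco : ((((∑ i : Fin n, M i i • DL i)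
      + ∑ p ∈ Finset.univ.filter (fun p : Fin n × Fin n => p.1 < p.2),
          M p.1 p.2 • SL p.1 p.2) : symMatrixLattice n) : Matrix (Fin n) (Fin n) ℤ)
      = (∑ i : Fin n, M i i • Dm i)
      + ∑ p ∈ Finset.univ.filter (fun p : Fin n × Fin n => p.1 < p.2),
          M p.1 p.2 • Sm p.1 p.2 := by
    push_cast [AddSubmonoidClass.coe_finset_sum]
    rfl
  rw [hco]
  ext a b
  simp only [Matrix.add_apply, Matrix.smul_apply, Matrix.sum_apply, smul_eq_mul]
  show M a b = _
  rcases lt_trichotomy a b with hab | hab | hab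
  · have hs1 : (∑ i : Fin n, M i i * Dm i a b) = 0 := by
      apply Finset.sum_eq_zero
      intro i _
      rw [Dm_zero (by rintro ⟨h1, h2⟩; exact (ne_of_lt hab) (h1 ▸ h2 ▸ rfl))]
      ring
    have hs2 : (∑ p ∈ Finset.univ.filter
        (fun p : Fin n × Fin n => p.1 < p.2), M p.1 p.2 * Sm p.1 p.2 a b) = M a b := by
      rw [Finset.sum_eq_single_of_mem (a, b)
        (by simp only [Finset.mem_filter, Finset.mem_univ, true_and]; exact hab)]
      · rw [Sm_apply, if_pos ⟨rfl, rfl⟩, if_neg (by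
          rintro ⟨h1, -⟩
          have e1 : (b:ℕ) = (a:ℕ) := congrArg Fin.val h1
          rw [Fin.lt_def] at hab
          omega)]
        ring
      · intro p hp hne
        rw [Finset.mem_filter, Fin.lt_def] at hp
        rw [Sm_zero (by rintro ⟨h1, h2⟩; exact hne (Prod.ext h1 h2)) (by
          rintro ⟨h1, h2⟩
          have e1 : (p.2:ℕ) = (a:ℕ) := congrArg Fin.val h1
          have e2 : (p.1:ℕ) = (b:ℕ) := congrArg Fin.val h2
          rw [Fin.lt_def] at hab
          omega)]
        ring
    rw [hs1, hs2]; ring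
  · subst hab
    have hs1 : (∑ i : Fin n, M i i * Dm i a a) = M a a := by
      rw [Finset.sum_eq_single_of_mem a (Finset.mem_univ a)]
      · rw [Dm_apply, if_pos ⟨rfl, rfl⟩]; ring
      · intro i _ hia
        rw [Dm_zero (by rintro ⟨h1, -⟩; exact hia h1)]; ring
    have hs2 : (∑ p ∈ Finset.univ.filter
        (fun p : Fin n × Fin n => p.1 < p.2), M p.1 p.2 * Sm p.1 p.2 a a) = 0 := by
      apply Finset.sum_eq_zero
      intro p hp
      rw [Finset.mem_filter, Fin.lt_def] at hp
      rw [Sm_zero (by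
          rintro ⟨h1, h2⟩
          have e1 : (p.1:ℕ) = (a:ℕ) := congrArg Fin.val h1
          have e2 : (p.2:ℕ) = (a:ℕ) := congrArg Fin.val h2
          omega) (by
          rintro ⟨h1, h2⟩
          have e1 : (p.2:ℕ) = (a:ℕ) := congrArg Fin.val h1
          have e2 : (p.1:ℕ) = (a:ℕ) := congrArg Fin.val h2
          omega)]
      ring
    rw [hs1, hs2]; ring
  · have hs1 : (∑ i : Fin n, M i i * Dm i a b) = 0 := by
      apply Finset.sum_eq_zero
      intro i _
      rw [Dm_zero (by rintro ⟨h1, h2⟩; exact (ne_of_lt hab) (h2 ▸ h1 ▸ rfl))]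
      ring
    have hs2 : (∑ p ∈ Finset.univ.filter
        (fun p : Fin n × Fin n => p.1 < p.2), M p.1 p.2 * Sm p.1 p.2 a b) = M a b := by
      rw [Finset.sum_eq_single_of_mem (b, a)
        (by simp only [Finset.mem_filter, Finset.mem_univ, true_and]; exact hab)]
      · rw [Sm_apply, if_neg (by
          rintro ⟨h1, -⟩
          have e1 : (b:ℕ) = (a:ℕ) := congrArg Fin.val h1
          rw [Fin.lt_def] at hab
          omega), if_pos ⟨rfl, rfl⟩]
        have hsym : M b a = M a b := by
          rw [← Matrix.transpose_apply M a b, hM]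
        rw [hsym]; ring
      · intro p hp hne
        rw [Finset.mem_filter, Fin.lt_def] at hp
        rw [Sm_zero (by
          rintro ⟨h1, h2⟩
          have e1 : (p.1:ℕ) = (a:ℕ) := congrArg Fin.val h1
          have e2 : (p.2:ℕ) = (b:ℕ) := congrArg Fin.val h2
          rw [Fin.lt_def] at hab
          omega) (by rintro ⟨h1, h2⟩; exact hne (Prod.ext h2 h1))]
        ring
    rw [hs1, hs2]; ring

lemma span_top (n : ℕ) (hn : 3 ≤ n) :
    Submodule.span ℤ (Set.range fun ℓ : fsBasisVectors n => rankOneSym n ℓ.1) = ⊤ := by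
  set P := Submodule.span ℤ (Set.range fun ℓ : fsBasisVectors n => rankOneSym n ℓ.1) with hP
  have hmemP : ∀ w ∈ fsBasisVectors n, rankOneSym n w ∈ P :=
    fun w hw => Submodule.subset_span ⟨⟨w, hw⟩, rfl⟩
  have hDL : ∀ i : Fin n, DL i ∈ P := by
    intro i
    rw [← rank_single]
    by_cases hi : (i:ℕ) = 0
    · exact hmemP _ (single0_mem hi)
    · exact hmemP _ (singleNe_mem hi)
  have hSLe : ∀ i j : Fin n, i < j → ¬((i:ℕ) = 1 ∧ (j:ℕ) = 2) → SL i j ∈ P := by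
    intro i j hij h12
    have hij' : i ≠ j := ne_of_lt hij
    have hjv : (j:ℕ) ≠ 0 := by rw [Fin.lt_def] at hij; omega
    have hv : Pi.single i 1 - Pi.single j 1 ∈ fsBasisVectors n := by
      by_cases hi : (i:ℕ) = 0
      · exact diff0_mem hi hjv
      · exact diff_mem hi hij h12
    have h1 : rankOneSym n (Pi.single i 1 - Pi.single j 1) ∈ P := hmemP _ hv
    rw [rank_diff hij'] at h1
    have h2 := sub_mem (add_mem (hDL i) (hDL j)) h1
    have e : DL i + DL j - (DL i + DL j - SL i j) = SL i j := by abel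
    rw [e] at h2
    exact h2
  have hq12 : SL (⟨1, by omega⟩ : Fin n) (⟨2, by omega⟩ : Fin n) ∈ P := by
    have hid := rank_v0 (n := n) hn
    have hqmem : ((⟨1, by omega⟩ : Fin n), (⟨2, by omega⟩ : Fin n)) ∈
        Finset.univ.filter (fun p : Fin n × Fin n => p.1.val ≠ 0 ∧ p.1 < p.2) := by
      simp only [Finset.mem_filter, Finset.mem_univ, true_and]
      refine ⟨by simp, ?_⟩
      rw [Fin.lt_def]; simp
    rw [← Finset.add_sum_erase _ _ hqmem] at hid
    have e : SL (⟨1, by omega⟩ : Fin n) (⟨2, by omega⟩ : Fin n)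
        = rankOneSym n (v0 n) - (4:ℤ) • DL (⟨0, by omega⟩ : Fin n)
        - (∑ k ∈ Finset.univ.filter (fun k : Fin n => k.val ≠ 0),
            ((-2:ℤ) • SL (⟨0, by omega⟩ : Fin n) k + DL k))
        - ∑ p ∈ (Finset.univ.filter
            (fun p : Fin n × Fin n => p.1.val ≠ 0 ∧ p.1 < p.2)).erase
            ((⟨1, by omega⟩ : Fin n), (⟨2, by omega⟩ : Fin n)),
            SL p.1 p.2 := by
      rw [hid]; abel
    rw [e]
    refine sub_mem (sub_mem (sub_mem (hmemP _ v0_mem)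
      (Submodule.smul_mem _ _ (hDL _))) ?_) ?_
    · refine Submodule.sum_mem _ ?_
      intro k hk
      rw [Finset.mem_filter] at hk
      refine add_mem (Submodule.smul_mem _ _ (hSLe _ k ?_ ?_)) (hDL k)
      · rw [Fin.lt_def]
        simpa using Nat.pos_of_ne_zero hk.2
      · rintro ⟨h1, -⟩
        simp at h1
    · refine Submodule.sum_mem _ ?_
      intro p hp
      rw [Finset.mem_erase, Finset.mem_filter] at hp
      refine hSLe p.1 p.2 hp.2.2.2 ?_
      rintro ⟨h1, h2⟩
      exact hp.1 (Prod.ext (Fin.ext (by simpa using h1)) (Fin.ext (by simpa using h2)))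
  have hSL : ∀ i j : Fin n, i < j → SL i j ∈ P := by
    intro i j hij
    by_cases h12 : (i:ℕ) = 1 ∧ (j:ℕ) = 2
    · have e1 : i = (⟨1, by omega⟩ : Fin n) := Fin.ext (by simpa using h12.1)
      have e2 : j = (⟨2, by omega⟩ : Fin n) := Fin.ext (by simpa using h12.2)
      rw [e1, e2]
      exact hq12
    · exact hSLe i j hij h12
  rw [eq_top_iff]
  rintro ⟨M, hM⟩ -
  rw [sym_decomp M hM]
  refine add_mem (Submodule.sum_mem _ fun i _ => Submodule.smul_mem _ _ (hDL i))
    (Submodule.sum_mem _ fun p hp => Submodule.smul_mem _ _ ?_)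
  rw [Finset.mem_filter] at hp
  exact hSL p.1 p.2 hp.2


lemma fs_cases {w : Fin n → ℤ} (hw : w ∈ fsBasisVectors n) :
    w = v0 n ∨ (∃ i : Fin n, w = Pi.single i 1) ∨
    (∃ i j : Fin n, j.val = 0 ∧ i.val ≠ 0 ∧ w = Pi.single j 1 - Pi.single i 1) ∨
    (∃ i j : Fin n, i.val ≠ 0 ∧ i < j ∧ ¬(i.val = 1 ∧ j.val = 2) ∧
        w = Pi.single i 1 - Pi.single j 1) := by
  rcases hw with ((((h | h) | h) | h) | h)
  · exact Or.inl h
  · exact Or.inr (Or.inl ⟨h.choose, h.choose_spec.2⟩)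
  · exact Or.inr (Or.inl ⟨h.choose, h.choose_spec.2⟩)
  · exact Or.inr (Or.inr (Or.inl h))
  · exact Or.inr (Or.inr (Or.inr h))

lemma fs_indep (n : ℕ) (hn : 3 ≤ n) :
    LinearIndependent ℤ (fun ℓ : fsBasisVectors n => rankOneSym n ℓ.1) := by
  rw [linearIndependent_iff']
  intro s g hsum
  have H : ∀ a b : Fin n, (∑ ℓ ∈ s, g ℓ * (ℓ.1 a * ℓ.1 b)) = 0 := by
    intro a b
    have h0 : ((∑ i ∈ s, g i • rankOneSym n i.1 : symMatrixLattice n) :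
        Matrix (Fin n) (Fin n) ℤ) a b
        = ((0 : symMatrixLattice n) : Matrix (Fin n) (Fin n) ℤ) a b := by rw [hsum]
    simp only [AddSubmonoidClass.coe_finset_sum, SetLike.val_smul, Matrix.sum_apply,
      Matrix.smul_apply, rankOneSym, Matrix.vecMulVec_apply, smul_eq_mul, mul_assoc,
      ZeroMemClass.coe_zero, Matrix.zero_apply] at h0
    exact h0
  set q1 : Fin n := ⟨1, by omega⟩ with hq1d
  set q2 : Fin n := ⟨2, by omega⟩ with hq2d
  have hq1 : (q1 : ℕ) = 1 := rfl
  have hq2 : (q2 : ℕ) = 2 := rfl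
  -- Claim 0 : coefficient of v0
  have C0 : ∀ ℓ ∈ s, ℓ.1 = v0 n → g ℓ = 0 := by
    intro ℓ hℓ hv
    have h := H q1 q2
    have hz : ∀ b ∈ s, b ≠ ℓ → g b * (b.1 q1 * b.1 q2) = 0 := by
      intro b hb hbne
      have hbv : b.1 ≠ v0 n := fun hh => hbne (Subtype.ext (hh.trans hv.symm))
      rcases fs_cases b.2 with h1 | ⟨i, h1⟩ | ⟨i, j, hj0, hi0, h1⟩ | ⟨i, j, hi0, hij, h12, h1⟩
      · exact absurd h1 hbv
      · rw [h1]
        rcases eq_or_ne q1 i with h2 | h2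
        · have hiv : (i:ℕ) = 1 := by rw [← congrArg Fin.val h2]
          rw [sp_ne (vne (by omega) : q2 ≠ i)]; ring
        · rw [sp_ne h2]; ring
      · rw [h1, Pi.sub_apply, Pi.sub_apply,
          sp_ne (vne (by omega) : q1 ≠ j), sp_ne (vne (by omega) : q2 ≠ j)]
        rcases eq_or_ne q1 i with h2 | h2
        · have hiv : (i:ℕ) = 1 := by rw [← congrArg Fin.val h2]
          rw [sp_ne (vne (by omega) : q2 ≠ i)]; ring
        · rw [sp_ne h2]; ring
      · rw [h1, Pi.sub_apply, Pi.sub_apply]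
        rw [Fin.lt_def] at hij
        rcases eq_or_ne q1 i with h2 | h2
        · have hiv : (i:ℕ) = 1 := by rw [← congrArg Fin.val h2]
          rcases eq_or_ne q2 j with h3 | h3
          · exact absurd ⟨hiv, by rw [← congrArg Fin.val h3]⟩ h12
          · rw [sp_ne (vne (by omega) : q2 ≠ i), sp_ne h3]; ring
        · rcases eq_or_ne q1 j with h3 | h3
          · have hjv : (j:ℕ) = 1 := by rw [← congrArg Fin.val h3]
            omega
          · rw [sp_ne h2, sp_ne h3]; ring
    rw [Finset.sum_eq_single_of_mem ℓ hℓ hz, hv, v0_apply, v0_apply,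
      if_neg (by omega), if_neg (by omega)] at h
    simpa using h
  -- Claim 5
  have C5 : ∀ ℓ ∈ s, ∀ i j : Fin n, (i:ℕ) ≠ 0 → i < j →
      ℓ.1 = Pi.single i 1 - Pi.single j 1 → g ℓ = 0 := by
    intro ℓ hℓ i j hi0 hij hv
    have hijv := hij
    rw [Fin.lt_def] at hijv
    have h := H i j
    have hz : ∀ b ∈ s, b ≠ ℓ → g b * (b.1 i * b.1 j) = 0 := by
      intro b hb hbne
      have hbv : b.1 ≠ ℓ.1 := fun hh => hbne (Subtype.ext hh)
      rcases fs_cases b.2 with h1 | ⟨k, h1⟩ | ⟨k, m, hm0, hk0, h1⟩ | ⟨k, m, hk0, hkm, h12, h1⟩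
      · rw [C0 b hb h1]; ring
      · rw [h1]
        rcases eq_or_ne i k with h2 | h2
        · have hkv := congrArg Fin.val h2
          rw [sp_ne (vne (by omega) : j ≠ k)]; ring
        · rw [sp_ne h2]; ring
      · rw [h1, Pi.sub_apply, Pi.sub_apply]
        rcases eq_or_ne i k with h2 | h2
        · have hkv := congrArg Fin.val h2
          rw [sp_ne (vne (by omega) : j ≠ m), sp_ne (vne (by omega) : j ≠ k)]; ring
        · rw [sp_ne h2, sp_ne (vne (by omega) : i ≠ m)]; ring
      · rw [h1, Pi.sub_apply, Pi.sub_apply]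
        rw [Fin.lt_def] at hkm
        rcases eq_or_ne i k with h2 | h2
        · rcases eq_or_ne j m with h3 | h3
          · exact absurd (h1.trans (by rw [← h2, ← h3]; exact hv.symm)) hbv
          · have hkv := congrArg Fin.val h2
            rw [sp_ne (vne (by omega) : j ≠ k), sp_ne h3]; ring
        · rcases eq_or_ne i m with h3 | h3
          · have hmv := congrArg Fin.val h3
            rw [sp_ne (vne (by omega) : j ≠ k), sp_ne (vne (by omega) : j ≠ m)]; ring
          · rw [sp_ne h2, sp_ne h3]; ring
    rw [Finset.sum_eq_single_of_mem ℓ hℓ hz, hv, Pi.sub_apply, Pi.sub_apply,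
      sp_self, sp_self,
      sp_ne (ne_of_lt hij : i ≠ j), sp_ne ((ne_of_lt hij).symm : j ≠ i)] at h
    simpa using h
  -- Claim 4
  have C4 : ∀ ℓ ∈ s, ∀ k m : Fin n, (m:ℕ) = 0 → (k:ℕ) ≠ 0 →
      ℓ.1 = Pi.single m 1 - Pi.single k 1 → g ℓ = 0 := by
    intro ℓ hℓ k m hm0 hk0 hv
    have h := H m k
    have hz : ∀ b ∈ s, b ≠ ℓ → g b * (b.1 m * b.1 k) = 0 := by
      intro b hb hbne
      have hbv : b.1 ≠ ℓ.1 := fun hh => hbne (Subtype.ext hh)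
      rcases fs_cases b.2 with h1 | ⟨t, h1⟩ | ⟨k', m', hm'0, hk'0, h1⟩ |
        ⟨k', m', hk'0, hk'm', h12, h1⟩
      · rw [C0 b hb h1]; ring
      · rw [h1]
        rcases eq_or_ne m t with h2 | h2
        · have htv := congrArg Fin.val h2
          rw [sp_ne (vne (by omega) : k ≠ t)]; ring
        · rw [sp_ne h2]; ring
      · have hmm' : m' = m := Fin.ext (by omega)
        rcases eq_or_ne k k' with h2 | h2
        · exact absurd (h1.trans (by rw [hmm', ← h2]; exact hv.symm)) hbv
        · rw [h1, Pi.sub_apply, Pi.sub_apply,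
            sp_ne (vne (by omega) : k ≠ m'), sp_ne h2]; ring
      · rw [h1, Pi.sub_apply, Pi.sub_apply]
        rw [Fin.lt_def] at hk'm'
        rw [sp_ne (vne (by omega) : m ≠ k'), sp_ne (vne (by omega) : m ≠ m')]; ring
    rw [Finset.sum_eq_single_of_mem ℓ hℓ hz, hv, Pi.sub_apply, Pi.sub_apply,
      sp_self, sp_self,
      sp_ne (vne (by omega) : m ≠ k), sp_ne (vne (by omega) : k ≠ m)] at h
    simpa using h
  -- Claim for diagonal vectors e_t
  have C23 : ∀ ℓ ∈ s, ∀ t : Fin n, ℓ.1 = Pi.single t 1 → g ℓ = 0 := by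
    intro ℓ hℓ t hv
    have h := H t t
    have hz : ∀ b ∈ s, b ≠ ℓ → g b * (b.1 t * b.1 t) = 0 := by
      intro b hb hbne
      have hbv : b.1 ≠ ℓ.1 := fun hh => hbne (Subtype.ext hh)
      rcases fs_cases b.2 with h1 | ⟨u, h1⟩ | ⟨k, m, hm0, hk0, h1⟩ |
        ⟨k, m, hk0, hkm, h12, h1⟩
      · rw [C0 b hb h1]; ring
      · rcases eq_or_ne t u with h2 | h2
        · exact absurd (h1.trans (by rw [← h2]; exact hv.symm)) hbv
        · rw [h1, sp_ne h2]; ring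
      · rw [C4 b hb k m hm0 hk0 h1]; ring
      · rw [C5 b hb k m hk0 hkm h1]; ring
    rw [Finset.sum_eq_single_of_mem ℓ hℓ hz, hv, sp_self] at h
    simpa using h
  intro ℓ hℓ
  rcases fs_cases ℓ.2 with h | ⟨i, h⟩ | ⟨i, j, hj0, hi0, h⟩ | ⟨i, j, hi0, hij, h12, h⟩
  · exact C0 ℓ hℓ h
  · exact C23 ℓ hℓ i h
  · exact C4 ℓ hℓ i j hj0 hi0 h
  · exact C5 ℓ hℓ i j hi0 hij h


end FS

/-- For `n ≥ 3`, the `n(n+1)/2` rank-one symmetric integer matrices `ℓℓᵀ`, where `ℓ` ranges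
over the vectors `2e₁ − e₂ − ⋯ − eₙ`; `e₂, …, eₙ`; `e₁`; `e₁ − eᵢ` (`i = 2, …, n`); and
`eᵢ − eⱼ` (`2 ≤ i < j ≤ n`, `(i,j) ≠ (2,3)`), form a `ℤ`-basis of the lattice of all
symmetric `n × n` integer matrices.  (Hence the Friedman–Smith monodromy cone is a basic
cone for `n ≥ 3`.) -/
theorem fs_cone_basic (n : ℕ) (hn : 3 ≤ n) :
    Nat.card (fsBasisVectors n) = n * (n + 1) / 2 ∧
    LinearIndependent ℤ (fun ℓ : fsBasisVectors n => rankOneSym n ℓ.1) ∧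
    Submodule.span ℤ (Set.range fun ℓ : fsBasisVectors n => rankOneSym n ℓ.1) = ⊤ :=
  ⟨FS.card_fs n hn, FS.fs_indep n hn, FS.span_top n hn⟩
end

section
/- Let u = (2,−1) and w = (0,1) in ℤ². Then the rank-one symmetric matrices uuᵀ and wwᵀ are linearly independent over ℝ, but the symmetric integer matrix ½(uuᵀ − wwᵀ) lies in their ℚ-span and not in their ℤ-span; in particular, uuᵀ and wwᵀ span a non-primitive sublattice of the lattice of symmetric 2×2 integer matrices and cannot be completed to a ℤ-basis of it. (Hence the Friedman–Smith monodromy cone for n = 2 is simplicial but not basic.) -/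
/-- `u = (2, −1) ∈ ℤ²`. -/
def u6 : Fin 2 → ℤ := ![2, -1]

/-- `w = (0, 1) ∈ ℤ²`. -/
def w6 : Fin 2 → ℤ := ![0, 1]

/-- The rank-one symmetric matrix `uuᵀ`. -/
def U6 : Matrix (Fin 2) (Fin 2) ℤ := Matrix.vecMulVec u6 u6

/-- The rank-one symmetric matrix `wwᵀ`. -/
def W6 : Matrix (Fin 2) (Fin 2) ℤ := Matrix.vecMulVec w6 w6

/-- The symmetric integer matrix `½(uuᵀ − wwᵀ)`. -/
def M6 : Matrix (Fin 2) (Fin 2) ℤ := !![2, -1; -1, 0]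

open Submodule

section

variable {ι R M : Type*} [Semiring R] [IsDomain R] [AddCommMonoid M] [Module R M]

theorem Module.Basis.mem_span_image_of_smul_mem (B : Basis ι R M) {s : Set ι} {c : R}
    (hc : c ≠ 0) {m : M} (h : c • m ∈ span R (B '' s)) : m ∈ span R (B '' s) := by
  rw [B.mem_span_image, map_smul, Finsupp.support_smul_eq hc] at h
  exact B.mem_span_image.2 h

theorem Submodule.not_exists_basis_of_smul_mem_span_pair {N : Submodule R M} {v w m : M}
    (hmN : m ∈ N) {c : R} (hc : c ≠ 0) (hcm : c • m ∈ span R {v, w})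
    (hm : m ∉ span R {v, w}) :
    ¬∃ (B : Module.Basis ι R N) (i j : ι), (B i : M) = v ∧ (B j : M) = w := by
  rintro ⟨B, i, j, rfl, rfl⟩
  have hspan : span R ({(B i : M), (B j : M)} : Set M) =
      (span R (B '' {i, j})).map N.subtype := by
    rw [Submodule.map_span, Set.image_pair, Set.image_pair]
    rfl
  have hcm' : c • (⟨m, hmN⟩ : N) ∈ span R (B '' {i, j}) := by
    rw [hspan] at hcm
    obtain ⟨x, hx, hxm⟩ := hcm
    rwa [show c • (⟨m, hmN⟩ : N) = x from Subtype.ext hxm.symm]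
  apply hm
  rw [hspan]
  exact ⟨_, B.mem_span_image_of_smul_mem hc hcm', rfl⟩

end

lemma U6_eq : U6 = !![4, -2; -2, 1] := by
  ext i j
  fin_cases i <;> fin_cases j <;> simp [U6, u6, Matrix.vecMulVec_apply]

lemma W6_eq : W6 = !![0, 0; 0, 1] := by
  ext i j
  fin_cases i <;> fin_cases j <;> simp [W6, w6, Matrix.vecMulVec_apply]

lemma M6_isSymm : M6.IsSymm := by
  ext i j
  fin_cases i <;> fin_cases j <;> rfl

lemma two_smul_M6 : (2 : ℤ) • M6 = U6 - W6 := by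
  rw [U6_eq, W6_eq]
  ext i j
  fin_cases i <;> fin_cases j <;> rfl

lemma linearIndependent_U6_W6 :
    LinearIndependent ℝ ![U6.map (Int.cast : ℤ → ℝ), W6.map (Int.cast : ℤ → ℝ)] := by
  rw [LinearIndependent.pair_iff]
  intro s t h
  have h00 := congrFun (congrFun h 0) 0
  have h11 := congrFun (congrFun h 1) 1
  simp [U6_eq, W6_eq] at h00 h11
  constructor <;> linarith

lemma M6_mem_span_rat :
    M6.map (Int.cast : ℤ → ℚ) ∈
      span ℚ {U6.map (Int.cast : ℤ → ℚ), W6.map (Int.cast : ℤ → ℚ)} := by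
  rw [mem_span_pair]
  refine ⟨1 / 2, -(1 / 2), ?_⟩
  ext i j
  fin_cases i <;> fin_cases j <;> norm_num [U6_eq, W6_eq, M6]

lemma M6_not_mem_span_int : M6 ∉ span ℤ {U6, W6} := by
  rw [mem_span_pair]
  rintro ⟨c, d, h⟩
  have h00 := congrFun (congrFun h 0) 0
  simp [U6_eq, W6_eq, M6] at h00
  omega

/-- Let `u = (2,−1)`, `w = (0,1)` in `ℤ²`.  The rank-one symmetric matrices `uuᵀ` and `wwᵀ`
are linearly independent over `ℝ`, but the symmetric integer matrix `½(uuᵀ − wwᵀ)` lies in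
their `ℚ`-span and not in their `ℤ`-span; in particular `uuᵀ` and `wwᵀ` span a
non-primitive sublattice of the lattice of symmetric `2 × 2` integer matrices and cannot be
completed to a `ℤ`-basis of it.  (Hence the Friedman–Smith monodromy cone for `n = 2` is
simplicial but not basic.) -/
theorem fs2_cone_simplicial_not_basic :
    LinearIndependent ℝ ![U6.map (Int.cast : ℤ → ℝ), W6.map (Int.cast : ℤ → ℝ)] ∧
    M6.IsSymm ∧
    (2 : ℤ) • M6 = U6 - W6 ∧
    M6.map (Int.cast : ℤ → ℚ) ∈
      Submodule.span ℚ {U6.map (Int.cast : ℤ → ℚ), W6.map (Int.cast : ℤ → ℚ)} ∧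
    M6 ∉ Submodule.span ℤ {U6, W6} ∧
    ¬∃ (B : Module.Basis (Fin 3) ℤ (symMatrixLattice 2)) (i j : Fin 3),
        i ≠ j ∧ (B i : Matrix (Fin 2) (Fin 2) ℤ) = U6 ∧
          (B j : Matrix (Fin 2) (Fin 2) ℤ) = W6 := by
  refine ⟨linearIndependent_U6_W6, M6_isSymm, two_smul_M6, M6_mem_span_rat,
    M6_not_mem_span_int, ?_⟩
  rintro ⟨B, i, j, -, hi, hj⟩
  have h2M6 : (2 : ℤ) • M6 ∈ span ℤ {U6, W6} := by
    rw [two_smul_M6]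
    exact sub_mem (subset_span (by simp)) (subset_span (by simp))
  exact not_exists_basis_of_smul_mem_span_pair (N := symMatrixLattice 2) M6_isSymm two_ne_zero
    h2M6 M6_not_mem_span_int ⟨B, i, j, hi, hj⟩
end

section
/- For n ≥ 2, the Friedman–Smith vectors v₁ = 2e₁ − e₂ − ⋯ − eₙ and vᵢ = eᵢ for i = 2,…,n in ℤⁿ are ℝ-linearly independent, and the subgroup of ℤⁿ they generate has index 2 in ℤⁿ (the determinant of the matrix with rows v₁,…,vₙ is ±2); in particular, they do not form a ℤ-basis of ℤⁿ. (Hence the Friedman–Smith monodromy cone is not matroidal for n ≥ 2.) -/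
/-!
The matrix with rows `v₁, …, vₙ` is upper triangular with diagonal `(2, 1, …, 1)`, so its
determinant is `2`. For an integer matrix with nonzero determinant, the index in `ℤⁿ` of the
lattice spanned by its rows is the absolute value of the determinant, and its rows stay
linearly independent over `ℝ`.
-/

/-- The Friedman–Smith vectors for `FS_n`: `v₁ = 2e₁ − e₂ − ⋯ − eₙ` and `vᵢ = eᵢ` for
`i = 2, …, n` (written with `0`-based indices). -/
def fsVec (n : ℕ) : Fin n → Fin n → ℤ := fun i =>
  if i.val = 0 then (fun k => if k.val = 0 then 2 else -1) else Pi.single i 1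

theorem Submodule.toAddSubgroup_index_span_range_eq_natAbs_det {ι : Type*} [Fintype ι]
    [DecidableEq ι] (v : ι → ι → ℤ) (hv : (Matrix.of v).det ≠ 0) :
    (Submodule.span ℤ (Set.range v)).toAddSubgroup.index = (Matrix.of v).det.natAbs := by
  have hli : LinearIndependent ℤ v := Matrix.linearIndependent_rows_of_det_ne_zero hv
  rw [AddSubgroup.index_eq_card, ← Pi.basisFun_det_apply]
  refine (natAbs_det_basis_change (Pi.basisFun ℤ ι) _ (Module.Basis.span hli)).symm.trans ?_
  congr 2
  ext i : 1
  simp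

theorem linearIndependent_intCast_rows_of_det_ne_zero {ι K : Type*} [Fintype ι] [DecidableEq ι]
    [Field K] [CharZero K] {A : Matrix ι ι ℤ} (hA : A.det ≠ 0) :
    LinearIndependent K fun i k => (A i k : K) := by
  refine Matrix.linearIndependent_rows_of_det_ne_zero (A := A.map (Int.cast : ℤ → K)) ?_
  convert (Int.cast_ne_zero (α := K)).2 hA using 1
  exact ((Int.castRingHom K).map_det A).symm

theorem fsVec_isUpperTriangular (n : ℕ) : (Matrix.of (fsVec n)).IsUpperTriangular := by
  intro i j hji
  have hi : i.val ≠ 0 := by simp only [id] at hji; omega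
  simp [fsVec, hi, (show j < i from hji).ne]

theorem fsVec_det {n : ℕ} (hn : 0 < n) : (Matrix.of (fsVec n)).det = 2 := by
  rw [Matrix.det_of_isUpperTriangular (fsVec_isUpperTriangular n),
    Finset.prod_eq_single (⟨0, hn⟩ : Fin n)]
  · simp [fsVec]
  · intro i _ hi
    have hi0 : i.val ≠ 0 := fun h => hi (Fin.ext h)
    simp [fsVec, hi0]
  · simp

/-- For `n ≥ 2`, the Friedman–Smith vectors `v₁ = 2e₁ − e₂ − ⋯ − eₙ`, `vᵢ = eᵢ`
(`i = 2, …, n`) in `ℤⁿ` are `ℝ`-linearly independent, the subgroup of `ℤⁿ` they generate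
has index `2` (the determinant of the matrix with these rows is `±2`), and in particular
they do not form a `ℤ`-basis of `ℤⁿ`.  (Hence the Friedman–Smith monodromy cone is not
matroidal for `n ≥ 2`.) -/
theorem fsVec_index_two (n : ℕ) (hn : 2 ≤ n) :
    LinearIndependent ℝ (fun i : Fin n => fun k : Fin n => ((fsVec n i k : ℤ) : ℝ)) ∧
    (Submodule.span ℤ (Set.range (fsVec n))).toAddSubgroup.index = 2 ∧
    ((Matrix.of (fsVec n)).det = 2 ∨ (Matrix.of (fsVec n)).det = -2) ∧
    Submodule.span ℤ (Set.range (fsVec n)) ≠ ⊤ := by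
  have hdet : (Matrix.of (fsVec n)).det = 2 := fsVec_det (by omega)
  have hdet_ne : (Matrix.of (fsVec n)).det ≠ 0 := hdet ▸ two_ne_zero
  have hindex : (Submodule.span ℤ (Set.range (fsVec n))).toAddSubgroup.index = 2 := by
    rw [Submodule.toAddSubgroup_index_span_range_eq_natAbs_det _ hdet_ne, hdet]
    rfl
  refine ⟨linearIndependent_intCast_rows_of_det_ne_zero hdet_ne, hindex, Or.inl hdet,
    fun htop => ?_⟩
  rw [htop, Submodule.top_toAddSubgroup, AddSubgroup.index_top] at hindex
  omega
end

section
/- For n ≥ 2 and every index i ∈ {1,…,n}, the n−1 Friedman–Smith vectors {v₁,…,vₙ} \ {vᵢ}, where v₁ = 2e₁ − e₂ − ⋯ − eₙ and vⱼ = eⱼ for j = 2,…,n, can be extended to a ℤ-basis of ℤⁿ; that is, any n−1 rows of the Friedman–Smith matrix span a primitive rank-(n−1) sublattice of ℤⁿ. (Hence every proper face of the Friedman–Smith monodromy cone is matroidal.) -/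
open Submodule

namespace Module.Basis

variable {ι R M : Type*} [Fintype ι] [DecidableEq ι] [CommRing R] [AddCommGroup M] [Module R M]

theorem span_range_update_eq_top_of_isUnit_repr (b : Basis ι R M) {i : ι} {v : M}
    (hv : IsUnit (b.repr v i)) : span R (Set.range (Function.update b i v)) = ⊤ := by
  set S := span R (Set.range (Function.update b i v))
  have mem_S (k : ι) : Function.update b i v k ∈ S := subset_span ⟨k, rfl⟩
  have hb_mem : b i ∈ S := by
    have hsum : b.repr v i • b i = v - ∑ k ∈ Finset.univ.erase i, b.repr v k • b k := by
      rw [eq_sub_iff_add_eq, Finset.add_sum_erase _ (fun k => b.repr v k • b k) (Finset.mem_univ i),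
        b.sum_repr]
    rw [← smul_mem_iff_of_isUnit S hv, hsum]
    refine sub_mem (by simpa using mem_S i) (sum_mem fun k hk => smul_mem _ _ ?_)
    simpa [Finset.ne_of_mem_erase hk] using mem_S k
  rw [eq_top_iff, ← b.span_eq, span_le]
  rintro _ ⟨k, rfl⟩
  by_cases hk : k = i
  · exact hk ▸ hb_mem
  · simpa [hk] using mem_S k

noncomputable def updateOfIsUnitRepr [Nontrivial R] (b : Basis ι R M) (i : ι) (v : M)
    (hv : IsUnit (b.repr v i)) : Basis ι R M :=
  basisOfTopLeSpanOfCardEqFinrank _ (b.span_range_update_eq_top_of_isUnit_repr hv).ge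
    (finrank_eq_card_basis b).symm

@[simp]
theorem coe_updateOfIsUnitRepr [Nontrivial R] (b : Basis ι R M) (i : ι) (v : M)
    (hv : IsUnit (b.repr v i)) : ⇑(b.updateOfIsUnitRepr i v hv) = Function.update b i v :=
  coe_basisOfTopLeSpanOfCardEqFinrank _ _ _

end Module.Basis

theorem fsVec_of_ne_zero {n : ℕ} {j : Fin n} (hj : j.val ≠ 0) : fsVec n j = Pi.single j 1 := by
  simp [fsVec, hj]

theorem fsVec_proper_subfamilies_extend_to_basis_general (n : ℕ) (i : Fin n) :
    ∃ (B : Module.Basis (Fin n) ℤ (Fin n → ℤ)) (f : Fin n ↪ Fin n),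
      ∀ j : Fin n, j ≠ i → B (f j) = fsVec n j := by
  set z : Fin n := ⟨0, i.pos⟩
  by_cases hi : i = z
  · refine ⟨Pi.basisFun ℤ (Fin n), Function.Embedding.refl _, fun j hj => ?_⟩
    have hj0 : j.val ≠ 0 := fun h => hj (hi ▸ Fin.ext h)
    simp [fsVec_of_ne_zero hj0]
  · have hv : IsUnit ((Pi.basisFun ℤ (Fin n)).repr (fsVec n z) i) := by
      have hi0 : i.val ≠ 0 := fun h => hi (Fin.ext h)
      simp [fsVec, z, hi0]
    refine ⟨(Pi.basisFun ℤ (Fin n)).updateOfIsUnitRepr i _ hv, (Equiv.swap z i).toEmbedding,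
      fun j hj => ?_⟩
    by_cases hjz : j = z
    · subst hjz; simp
    · have hj0 : j.val ≠ 0 := fun h => hjz (Fin.ext h)
      simp [Equiv.swap_apply_of_ne_of_ne hjz hj, hj, fsVec_of_ne_zero hj0]

/-- For `n ≥ 2` and every index `i`, the `n − 1` Friedman–Smith vectors `{v₁, …, vₙ} \ {vᵢ}`
can be extended to a `ℤ`-basis of `ℤⁿ`; that is, any `n − 1` rows of the Friedman–Smith
matrix span a primitive rank-`(n−1)` sublattice of `ℤⁿ`.  (Hence every proper face of the
Friedman–Smith monodromy cone is matroidal.) -/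
theorem fsVec_proper_subfamilies_extend_to_basis (n : ℕ) (hn : 2 ≤ n) (i : Fin n) :
    ∃ (B : Module.Basis (Fin n) ℤ (Fin n → ℤ)) (f : Fin n ↪ Fin n),
      ∀ j : Fin n, j ≠ i → B (f j) = fsVec n j :=
  fsVec_proper_subfamilies_extend_to_basis_general n i
end

section
/- There is no quadratic form Q on ℝ² such that Q is positive definite, Q(v) ≥ 1 for every nonzero v ∈ ℤ², and Q(2e₁ − e₂) = Q(e₂) = 1. (Hence the Friedman–Smith monodromy cone for n = 2 is not contained in any cone of the perfect cone decomposition, nor of the central cone decomposition.) -/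
/-- There is no quadratic form `Q` on `ℝ²` that is positive definite, takes values `≥ 1` on
every nonzero integer vector, and takes the value `1` on the Friedman–Smith generators
`2e₁ − e₂` and `e₂` for `n = 2`.  (Hence the Friedman–Smith monodromy cone for `n = 2` is
not contained in any cone of the perfect cone decomposition, nor of the central cone
decomposition.) -/
theorem no_perfect_form_for_FS2 :
    ¬∃ Q : QuadraticForm ℝ (Fin 2 → ℝ),
      (∀ x : Fin 2 → ℝ, x ≠ 0 → 0 < Q x) ∧
      (∀ v : Fin 2 → ℤ, v ≠ 0 → 1 ≤ Q fun k => (v k : ℝ)) ∧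
      Q ![2, -1] = 1 ∧ Q ![0, 1] = 1 := by
  rintro ⟨Q, hpos, hint, hu, hv⟩
  set u : Fin 2 → ℝ := ![2, -1] with hu'
  set v : Fin 2 → ℝ := ![0, 1] with hv'
  -- parallelogram law
  have hpar : Q (u + v) + Q (u - v) = 2 * Q u + 2 * Q v := by
    have h1 : Q (u + v) = Q u + Q v + QuadraticMap.polar Q u v := by
      simp [QuadraticMap.polar]
    have h2 : Q (u - v) = Q u + Q v - QuadraticMap.polar Q u v := by
      have : u - v = u + (-v) := by ring
      rw [this]
      have := QuadraticMap.polar_neg_right Q u v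
      simp [QuadraticMap.polar] at this ⊢
      linarith
    rw [h1, h2]; ring
  have huv : u + v = (2 : ℝ) • ![1, 0] := by
    funext i; fin_cases i <;> simp [hu', hv']
  have he1 : (1 : ℝ) ≤ Q ![1, 0] := by
    have hne : (![1, 0] : Fin 2 → ℤ) ≠ 0 := by decide
    have := hint ![1, 0] hne
    have heq : (fun k => ((![1, 0] : Fin 2 → ℤ) k : ℝ)) = ![1, 0] := by
      funext i; fin_cases i <;> simp
    rwa [heq] at this
  have h3 : (4 : ℝ) ≤ Q (u + v) := by
    rw [huv, QuadraticMap.map_smul, smul_eq_mul]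
    nlinarith
  have h4 : 0 < Q (u - v) := by
    apply hpos
    intro h
    have := congrFun h 0
    simp [hu', hv'] at this
  rw [hu, hv] at hpar
  linarith
end

section
/- There is no quadratic form Q on ℝ³ such that Q is positive definite, Q(v) ≥ 1 for every nonzero v ∈ ℤ³, and Q(2e₁ − e₂ − e₃) = Q(e₂) = Q(e₃) = 1. (Hence the Friedman–Smith monodromy cone for n = 3 is not contained in any cone of the perfect cone decomposition, nor of the central cone decomposition.) -/
/-!
With `u = a - b` and `w = a - c`, the three-term polarization identity
`Q (u + w - a) + Q u + Q w + Q a = Q (u + w) + Q (w - a) + Q (u - a)` turns into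
`Q (2a - b - c) + Q b + Q c = Q a + Q (a - b) + Q (a - c) + Q (a - b - c)`.
For `a = e₁, b = e₂, c = e₃` the left side is `3` when `Q` is `1` on the Friedman–Smith
generators, while the right side is a sum of four values of `Q` at nonzero integer vectors,
hence at least `4`.
-/

namespace QuadraticMap

variable {R M N : Type*} [CommRing R] [AddCommGroup M] [Module R M] [AddCommGroup N]
  [Module R N]

theorem map_two_smul_sub_sub_add_map_add_map (Q : QuadraticMap R M N) (a b c : M) :
    Q (2 • a - b - c) + Q b + Q c = Q a + Q (a - b) + Q (a - c) + Q (a - b - c) := by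
  have h := Q.map_add_add_add_map (a - b) (a - c) (-a)
  rw [show a - b + (a - c) = 2 • a - b - c by abel, show a - c + -a = -c by abel,
    show -a + (a - b) = -b by abel, show 2 • a - b - c + -a = a - b - c by abel,
    QuadraticMap.map_neg, QuadraticMap.map_neg, QuadraticMap.map_neg] at h
  rw [eq_comm, ← sub_eq_zero]
  rw [← sub_eq_zero] at h
  convert h using 1
  abel

end QuadraticMap

/-- There is no quadratic form `Q` on `ℝ³` that is positive definite, takes values `≥ 1` on
every nonzero integer vector, and takes the value `1` on the Friedman–Smith generators
`2e₁ − e₂ − e₃`, `e₂`, `e₃` for `n = 3`.  (Hence the Friedman–Smith monodromy cone for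
`n = 3` is not contained in any cone of the perfect cone decomposition, nor of the central
cone decomposition.) -/
theorem no_perfect_form_for_FS3 :
    ¬∃ Q : QuadraticForm ℝ (Fin 3 → ℝ),
      (∀ x : Fin 3 → ℝ, x ≠ 0 → 0 < Q x) ∧
      (∀ v : Fin 3 → ℤ, v ≠ 0 → 1 ≤ Q fun k => (v k : ℝ)) ∧
      Q ![2, -1, -1] = 1 ∧ Q ![0, 1, 0] = 1 ∧ Q ![0, 0, 1] = 1 := by
  rintro ⟨Q, -, hmin, hv, he₂, he₃⟩
  have hint : ∀ x y z : ℤ, ![x, y, z] ≠ 0 → 1 ≤ Q ![(x : ℝ), y, z] := fun x y z h => by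
    convert hmin _ h using 2
    ext k
    fin_cases k <;> rfl
  have h₁ := hint 1 0 0 (by decide)
  have h₂ := hint 1 (-1) 0 (by decide)
  have h₃ := hint 1 0 (-1) (by decide)
  have h₄ := hint 1 (-1) (-1) (by decide)
  have key := Q.map_two_smul_sub_sub_add_map_add_map ![1, 0, 0] ![0, 1, 0] ![0, 0, 1]
  simp only [Matrix.cons_sub_cons, Matrix.smul_cons, Matrix.empty_sub_empty,
    Matrix.smul_empty] at key
  norm_num only [nsmul_eq_mul] at key h₁ h₂ h₃ h₄
  linarith
end

section
/- For every n ≥ 4, the quadratic form Q(x) = (n/4)x₁² + Σ_{j=2}^{n} xⱼ² + x₁·Σ_{j=2}^{n} xⱼ on ℝⁿ is positive definite, satisfies Q(2e₁ − e₂ − ⋯ − eₙ) = 1 and Q(eⱼ) = 1 for all j = 2,…,n, and satisfies Q(v) ≥ 1 for every nonzero v ∈ ℤⁿ. (Hence for n ≥ 4 the Friedman–Smith monodromy cone is contained in a cone of the perfect cone decomposition.) -/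
lemma FS_quarter (k : ℤ) : (1/4 : ℝ) ≤ ((k : ℝ) + 1/2)^2 := by
  have h : (0 : ℤ) ≤ k * (k + 1) := by
    rcases le_or_gt 0 k with h | h
    · exact mul_nonneg h (by omega)
    · have h1 : k ≤ -1 := by omega
      nlinarith
  have h' : (0 : ℝ) ≤ (k : ℝ) * ((k : ℝ) + 1) := by exact_mod_cast h
  nlinarith

lemma FS_one_le_sq (k : ℤ) (hk : k ≠ 0) : (1 : ℝ) ≤ ((k : ℝ))^2 := by
  have h : (1 : ℤ) ≤ k^2 := by
    have := Int.one_le_abs hk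
    nlinarith [sq_abs k]
  exact_mod_cast h

/-- For every `n ≥ 4`, the quadratic form
`Q(x) = (n/4) x₁² + ∑_{j=2}^{n} xⱼ² + x₁ ∑_{j=2}^{n} xⱼ`
on `ℝⁿ` is positive definite, takes the value `1` on the Friedman–Smith vectors
`2e₁ − e₂ − ⋯ − eₙ` and `e₂, …, eₙ`, and satisfies `Q(v) ≥ 1` for every nonzero `v ∈ ℤⁿ`.
(Hence for `n ≥ 4` the Friedman–Smith monodromy cone is contained in a cone of the perfect
cone decomposition.)  Indices are `0`-based. -/
theorem FS_perfect_form (n : ℕ) (hn : 4 ≤ n) (Q : (Fin n → ℝ) → ℝ)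
    (hQ : Q = fun x =>
      ((n : ℝ) / 4) * x ⟨0, by omega⟩ ^ 2 +
        (∑ j ∈ Finset.univ.filter fun j : Fin n => j.val ≠ 0, x j ^ 2) +
        x ⟨0, by omega⟩ * ∑ j ∈ Finset.univ.filter fun j : Fin n => j.val ≠ 0, x j) :
    (∀ x : Fin n → ℝ, x ≠ 0 → 0 < Q x) ∧
    Q (fun k => if k.val = 0 then 2 else -1) = 1 ∧
    (∀ j : Fin n, j.val ≠ 0 → Q (Pi.single j 1) = 1) ∧
    (∀ v : Fin n → ℤ, v ≠ 0 → 1 ≤ Q fun k => (v k : ℝ)) := by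
  have hn0 : 0 < n := by omega
  set z : Fin n := ⟨0, hn0⟩ with hz
  set F : Finset (Fin n) := Finset.univ.filter fun j : Fin n => j.val ≠ 0 with hF
  have hmem : ∀ j : Fin n, j ∈ F ↔ j ≠ z := by
    intro j
    simp [hF, hz, Fin.ext_iff]
  have hcardF : F.card = n - 1 := by
    have hFe : F = Finset.univ.erase z := by
      ext j; simp [hmem j, Finset.mem_erase]
    rw [hFe, Finset.card_erase_of_mem (Finset.mem_univ z), Finset.card_univ,
      Fintype.card_fin]
  have hcard : (F.card : ℝ) = (n : ℝ) - 1 := by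
    rw [hcardF, Nat.cast_sub hn0, Nat.cast_one]
  -- The key identity: Q x = (x z)^2/4 + ∑_{j ∈ F} (x j + x z / 2)^2
  have key : ∀ x : Fin n → ℝ,
      Q x = (x z)^2/4 + ∑ j ∈ F, (x j + x z / 2)^2 := by
    intro x
    have expand : ∑ j ∈ F, (x j + x z / 2)^2
        = (∑ j ∈ F, x j ^ 2) + x z * (∑ j ∈ F, x j) + (F.card : ℝ) * (x z^2/4) := by
      have h1 : ∀ j ∈ F, (x j + x z / 2)^2 = x j^2 + x z * x j + x z^2/4 :=
        fun j _ => by ring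
      rw [Finset.sum_congr rfl h1, Finset.sum_add_distrib, Finset.sum_add_distrib,
        ← Finset.mul_sum, Finset.sum_const, nsmul_eq_mul]
    rw [hQ]
    show ((n : ℝ) / 4) * x z ^ 2 + (∑ j ∈ F, x j ^ 2) + x z * ∑ j ∈ F, x j
        = (x z)^2/4 + ∑ j ∈ F, (x j + x z / 2)^2
    rw [expand, hcard]
    ring
  have hsumnn : ∀ x : Fin n → ℝ, 0 ≤ ∑ j ∈ F, (x j + x z / 2)^2 :=
    fun x => Finset.sum_nonneg fun j _ => sq_nonneg _
  refine ⟨?_, ?_, ?_, ?_⟩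
  · -- positive definiteness
    intro x hx
    rw [key x]
    by_contra h
    push_neg at h
    have hq : (x z)^2/4 = 0 ∧ ∑ j ∈ F, (x j + x z / 2)^2 = 0 := by
      constructor <;> nlinarith [hsumnn x, sq_nonneg (x z)]
    have hxz : x z = 0 := by nlinarith [hq.1]
    have hall : ∀ j ∈ F, (x j + x z / 2)^2 = 0 :=
      (Finset.sum_eq_zero_iff_of_nonneg (fun j _ => sq_nonneg _)).1 hq.2
    apply hx
    funext j
    by_cases hj : j = z
    · rw [hj, hxz]; rfl
    · have h0 := hall j ((hmem j).2 hj)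
      rw [hxz] at h0
      have h1 : x j + 0 / 2 = 0 := by
        exact pow_eq_zero_iff (by norm_num : (2:ℕ) ≠ 0) |>.1 h0
      have : x j = 0 := by linarith
      simpa using this
  · -- value on the long Friedman–Smith vector
    rw [key]
    show ((if (z : Fin n).val = 0 then (2:ℝ) else -1))^2/4 +
        ∑ j ∈ F, ((if j.val = 0 then (2:ℝ) else -1) +
          (if (z : Fin n).val = 0 then (2:ℝ) else -1) / 2)^2 = 1
    have hzv : (z : Fin n).val = 0 := rfl
    rw [if_pos hzv]
    rw [Finset.sum_eq_zero]
    · norm_num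
    · intro j hj
      have hj0 : j.val ≠ 0 := by
        have := (hmem j).1 hj
        simpa [hz, Fin.ext_iff] using this
      rw [if_neg hj0]
      norm_num
  · -- values on the basis vectors e_j, j ≠ 0
    intro j hj
    rw [key]
    have hjz : j ≠ z := by
      intro h; apply hj; rw [h]
    have h1 : (Pi.single j 1 : Fin n → ℝ) z = 0 := Pi.single_eq_of_ne (Ne.symm hjz) 1
    rw [h1]
    rw [Finset.sum_eq_single j]
    · rw [Pi.single_eq_same]; norm_num
    · intro b _ hbj
      rw [Pi.single_eq_of_ne hbj]; norm_num
    · intro hjF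
      exact absurd ((hmem j).2 hjz) hjF
  · -- values ≥ 1 on nonzero integer vectors
    intro v hv
    rw [key]
    show 1 ≤ ((v z : ℝ))^2/4 + ∑ j ∈ F, ((v j : ℝ) + (v z : ℝ) / 2)^2
    have hsum0 : 0 ≤ ∑ j ∈ F, ((v j : ℝ) + (v z : ℝ) / 2)^2 :=
      Finset.sum_nonneg fun j _ => sq_nonneg _
    rcases Int.even_or_odd (v z) with ⟨m, hm⟩ | ⟨m, hm⟩
    · -- even case : v z = 2 m
      by_cases hm0 : m = 0
      · -- v z = 0; some other coordinate is nonzero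
        have hvz : v z = 0 := by rw [hm, hm0]; ring
        obtain ⟨j, hj⟩ := Function.ne_iff.1 hv
        have hjz : j ≠ z := by
          intro h; rw [h] at hj; exact hj hvz
        have hjF : j ∈ F := (hmem j).2 hjz
        have hle : ((v j : ℝ) + (v z : ℝ) / 2)^2
            ≤ ∑ k ∈ F, ((v k : ℝ) + (v z : ℝ) / 2)^2 :=
          Finset.single_le_sum (f := fun k => ((v k : ℝ) + (v z : ℝ) / 2)^2)
            (fun k _ => sq_nonneg _) hjF
        have h1 : (1 : ℝ) ≤ ((v j : ℝ) + (v z : ℝ) / 2)^2 := by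
          have := FS_one_le_sq (v j) (by simpa using hj)
          rw [hvz]
          push_cast
          linarith
        nlinarith [sq_nonneg ((v z : ℝ))]
      · -- v z = 2m ≠ 0
        have hA : ((v z : ℝ))^2/4 = ((m : ℝ))^2 := by
          rw [hm]; push_cast; ring
        have h1 : (1 : ℝ) ≤ ((m : ℝ))^2 := FS_one_le_sq m hm0
        linarith [hA ▸ h1]
    · -- odd case : v z = 2 m + 1
      have hA : (1/4 : ℝ) ≤ ((v z : ℝ))^2/4 := by
        have : (1 : ℝ) ≤ ((v z : ℝ))^2 := FS_one_le_sq (v z) (by omega)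
        linarith
      have hterm : ∀ j ∈ F, (1/4 : ℝ) ≤ ((v j : ℝ) + (v z : ℝ) / 2)^2 := by
        intro j _
        have heq : ((v j : ℝ) + (v z : ℝ) / 2)^2 = (((v j + m : ℤ) : ℝ) + 1/2)^2 := by
          rw [hm]; push_cast; ring
        rw [heq]
        exact FS_quarter (v j + m)
      have hS : (F.card : ℝ) * (1/4 : ℝ) ≤ ∑ j ∈ F, ((v j : ℝ) + (v z : ℝ) / 2)^2 := by
        calc (F.card : ℝ) * (1/4 : ℝ) = ∑ _j ∈ F, (1/4 : ℝ) := by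
              rw [Finset.sum_const, nsmul_eq_mul]
          _ ≤ _ := Finset.sum_le_sum hterm
      rw [hcard] at hS
      have hn' : (4 : ℝ) ≤ (n : ℝ) := by exact_mod_cast hn
      linarith
end

section
/- For n ≥ 4, let L ⊂ ℝⁿ be the lattice generated by the vector ½(e₁ + ⋯ + eₙ) together with e₂, …, eₙ. Then L contains ℤⁿ as a sublattice of index 2, every nonzero v ∈ L satisfies v₁² + ⋯ + vₙ² ≥ 1, and if n > 4 then the nonzero vectors of L of minimal squared length 1 are exactly the 2n vectors ±e₁, …, ±eₙ. -/
/-!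
Write `h = (½, …, ½)`. Since `e₁ = 2h - e₂ - ⋯ - eₙ`, the lattice `L` is `ℤⁿ + ℤh`, and as
`2h ∈ ℤⁿ ∌ h` it is the disjoint union of `ℤⁿ` and the coset `h + ℤⁿ`. A nonzero integer vector
has squared length at least `1`, with equality exactly at `±eᵢ`; a vector of the coset has all
coordinates in `½ + ℤ`, so its squared length is at least `n/4`, which is `≥ 1` for `n ≥ 4` and
`> 1` for `n > 4`.
-/

open Submodule Set

namespace Submodule

variable {M : Type*} [AddCommGroup M] {N : Submodule ℤ M} {h : M}

lemma mem_sup_span_singleton_iff_of_two_smul_mem (h2 : (2 : ℤ) • h ∈ N) {x : M} :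
    x ∈ N ⊔ ℤ ∙ h ↔ x ∈ N ∨ x - h ∈ N := by
  refine ⟨fun hx => ?_, ?_⟩
  · obtain ⟨y, hy, z, hz, rfl⟩ := mem_sup.1 hx
    obtain ⟨m, rfl⟩ := mem_span_singleton.1 hz
    obtain ⟨k, rfl | rfl⟩ := Int.even_or_odd' m
    · left
      rw [mul_comm, mul_smul]
      exact N.add_mem hy (N.smul_mem k h2)
    · right
      rw [add_sub_assoc, add_smul, one_smul, add_sub_cancel_right, mul_comm, mul_smul]
      exact N.add_mem hy (N.smul_mem k h2)
  · rintro (hx | hx)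
    · exact mem_sup_left hx
    · rw [← sub_add_cancel x h]
      exact add_mem (mem_sup_left hx) (mem_sup_right (mem_span_singleton_self h))

lemma relIndex_sup_span_singleton_eq_two (h2 : (2 : ℤ) • h ∈ N) (hh : h ∉ N) :
    N.toAddSubgroup.relIndex (N ⊔ ℤ ∙ h).toAddSubgroup = 2 := by
  refine AddSubgroup.relIndex_eq_two_iff_exists_notMem_and.2
    ⟨h, mem_sup_right (mem_span_singleton_self h), hh, fun x hx => ?_⟩
  rcases (mem_sup_span_singleton_iff_of_two_smul_mem h2).1 hx with hx | hx
  · exact Or.inr hx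
  · left
    have : x + h = x - h + (2 : ℤ) • h := by rw [two_smul]; abel
    rw [mem_toAddSubgroup, this]
    exact N.add_mem hx h2

end Submodule

lemma one_le_sq_of_mem_range_intCast {x : ℝ} (hx : x ∈ range ((↑) : ℤ → ℝ)) (h0 : x ≠ 0) :
    1 ≤ x ^ 2 := by
  obtain ⟨k, rfl⟩ := hx
  rw [one_le_sq_iff_one_le_abs, ← Int.cast_abs]
  exact_mod_cast Int.one_le_abs (by exact_mod_cast h0)

lemma one_div_four_le_sq_of_sub_half_mem_range_intCast {x : ℝ}
    (hx : x - 1 / 2 ∈ range ((↑) : ℤ → ℝ)) : 1 / 4 ≤ x ^ 2 := by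
  obtain ⟨k, hk⟩ := hx
  have h2x : 2 * x = ((2 * k + 1 : ℤ) : ℝ) := by push_cast; linarith
  have : 1 ≤ (2 * x) ^ 2 := one_le_sq_of_mem_range_intCast ⟨_, h2x.symm⟩ (by
    rw [h2x]; exact_mod_cast (by omega : 2 * k + 1 ≠ 0))
  linarith

def intLattice (ι : Type*) [DecidableEq ι] : Submodule ℤ (ι → ℝ) :=
  span ℤ (range fun i => Pi.single i 1)

section IntLattice

variable {ι : Type*} [Fintype ι] [DecidableEq ι]

lemma mem_intLattice_iff {v : ι → ℝ} : v ∈ intLattice ι ↔ ∀ i, v i ∈ range ((↑) : ℤ → ℝ) := by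
  rw [intLattice, ← funext (Pi.basisFun_apply ℝ ι), Module.Basis.mem_span_iff_repr_mem]
  simp only [Pi.basisFun_repr, algebraMap_int_eq, Int.coe_castRingHom]

lemma single_eq_two_smul_half_sub_sum (i₀ : ι) :
    (Pi.single i₀ 1 : ι → ℝ) =
      (2 : ℤ) • (fun _ => (1 : ℝ) / 2) - ∑ i ∈ Finset.univ.erase i₀, Pi.single i 1 := by
  rw [eq_sub_iff_add_eq, Finset.add_sum_erase _ (fun i => Pi.single i (1 : ℝ)) (Finset.mem_univ i₀),
    Finset.univ_sum_single]
  ext; norm_num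

lemma span_half_union_single_ne_eq (i₀ : ι) :
    span ℤ ({fun _ => (1 : ℝ) / 2} ∪ {v | ∃ i, i ≠ i₀ ∧ v = Pi.single i 1}) =
      intLattice ι ⊔ ℤ ∙ fun _ => (1 : ℝ) / 2 := by
  apply le_antisymm
  · rw [span_le, union_subset_iff]
    refine ⟨singleton_subset_iff.2 (mem_sup_right (mem_span_singleton_self _)), ?_⟩
    rintro _ ⟨i, -, rfl⟩
    exact mem_sup_left (subset_span ⟨i, rfl⟩)
  · set S := span ℤ ({fun _ => (1 : ℝ) / 2} ∪ {v | ∃ i, i ≠ i₀ ∧ v = Pi.single i 1})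
    have hhalf : (fun _ => (1 : ℝ) / 2) ∈ S := subset_span (Or.inl rfl)
    have hsingle : ∀ i ≠ i₀, Pi.single i 1 ∈ S := fun i hi => subset_span (Or.inr ⟨i, hi, rfl⟩)
    refine sup_le (span_le.2 (range_subset_iff.2 fun i => ?_))
      ((span_singleton_le_iff_mem _ _).2 hhalf)
    by_cases hi : i = i₀
    · rw [SetLike.mem_coe, hi, single_eq_two_smul_half_sub_sum]
      exact sub_mem (smul_mem _ _ hhalf) (sum_mem fun j hj => hsingle j (Finset.ne_of_mem_erase hj))
    · exact hsingle i hi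

lemma two_smul_half_mem_intLattice : (2 : ℤ) • (fun _ => (1 : ℝ) / 2) ∈ intLattice ι :=
  mem_intLattice_iff.2 fun _ => ⟨1, by norm_num⟩

lemma half_notMem_intLattice [Nonempty ι] : (fun _ => (1 : ℝ) / 2) ∉ intLattice ι := by
  intro h
  obtain ⟨k, hk⟩ := mem_intLattice_iff.1 h (Classical.arbitrary ι)
  have : ((2 * k : ℤ) : ℝ) = 1 := by push_cast; rw [hk]; norm_num
  have : 2 * k = 1 := by exact_mod_cast this
  omega

lemma one_le_sum_sq_of_mem_intLattice {v : ι → ℝ} (hv : v ∈ intLattice ι) (hv0 : v ≠ 0) :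
    1 ≤ ∑ i, v i ^ 2 := by
  obtain ⟨j, hj⟩ := Function.ne_iff.1 hv0
  exact (one_le_sq_of_mem_range_intCast (mem_intLattice_iff.1 hv j) hj).trans
    (Finset.single_le_sum (fun i _ => sq_nonneg (v i)) (Finset.mem_univ j))

lemma card_div_four_le_sum_sq_of_sub_half_mem_intLattice {v : ι → ℝ}
    (hv : v - (fun _ => 1 / 2) ∈ intLattice ι) : (Fintype.card ι : ℝ) / 4 ≤ ∑ i, v i ^ 2 := by
  have := Finset.card_nsmul_le_sum Finset.univ (fun i => v i ^ 2) (1 / 4) fun i _ =>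
    one_div_four_le_sq_of_sub_half_mem_range_intCast (mem_intLattice_iff.1 hv i)
  rw [nsmul_eq_mul, Finset.card_univ] at this
  linarith

lemma exists_eq_single_or_eq_neg_single_of_sum_sq_eq_one {v : ι → ℝ} (hv : v ∈ intLattice ι)
    (h1 : ∑ i, v i ^ 2 = 1) : ∃ i, v = Pi.single i 1 ∨ v = -Pi.single i 1 := by
  obtain ⟨j, hj⟩ : ∃ j, v j ≠ 0 := Function.ne_iff.1 fun h => by simp [h] at h1
  have hj1 := one_le_sq_of_mem_range_intCast (mem_intLattice_iff.1 hv j) hj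
  have hsplit := Finset.add_sum_erase Finset.univ (fun i => v i ^ 2) (Finset.mem_univ j)
  have hnonneg : ∀ i ∈ Finset.univ.erase j, 0 ≤ v i ^ 2 := fun i _ => sq_nonneg (v i)
  have hrest : ∑ i ∈ Finset.univ.erase j, v i ^ 2 = 0 := by
    linarith [Finset.sum_nonneg hnonneg]
  have hvj : v = Pi.single j (v j) := by
    ext i
    rcases eq_or_ne i j with rfl | hi
    · simp
    · rw [Pi.single_eq_of_ne hi]
      exact pow_eq_zero_iff two_ne_zero |>.1 <|
        (Finset.sum_eq_zero_iff_of_nonneg hnonneg).1 hrest i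
          (Finset.mem_erase.2 ⟨hi, Finset.mem_univ i⟩)
  rcases sq_eq_one_iff.1 (by linarith : v j ^ 2 = 1) with h | h
  · exact ⟨j, Or.inl (by rw [hvj, h])⟩
  · exact ⟨j, Or.inr (by rw [hvj, h, Pi.single_neg])⟩

lemma mem_intLattice_sup_half_iff {v : ι → ℝ} :
    v ∈ intLattice ι ⊔ ℤ ∙ (fun _ => (1 : ℝ) / 2) ↔
      v ∈ intLattice ι ∨ v - (fun _ => 1 / 2) ∈ intLattice ι :=
  mem_sup_span_singleton_iff_of_two_smul_mem two_smul_half_mem_intLattice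

lemma one_le_sum_sq_of_mem_intLattice_sup_half (hι : 4 ≤ Fintype.card ι) {v : ι → ℝ}
    (hv : v ∈ intLattice ι ⊔ ℤ ∙ (fun _ => (1 : ℝ) / 2)) (hv0 : v ≠ 0) : 1 ≤ ∑ i, v i ^ 2 := by
  rcases mem_intLattice_sup_half_iff.1 hv with hv | hv
  · exact one_le_sum_sq_of_mem_intLattice hv hv0
  · have : (4 : ℝ) ≤ Fintype.card ι := by exact_mod_cast hι
    linarith [card_div_four_le_sum_sq_of_sub_half_mem_intLattice hv]

lemma setOf_mem_intLattice_sup_half_sum_sq_eq_one (hι : 4 < Fintype.card ι) :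
    {v | v ∈ intLattice ι ⊔ ℤ ∙ (fun _ => (1 : ℝ) / 2) ∧ ∑ i, v i ^ 2 = 1} =
      {v | ∃ i, v = Pi.single i 1 ∨ v = -Pi.single i 1} := by
  ext v
  constructor
  · rintro ⟨hv, h1⟩
    rcases mem_intLattice_sup_half_iff.1 hv with hv | hv
    · exact exists_eq_single_or_eq_neg_single_of_sum_sq_eq_one hv h1
    · have : (5 : ℝ) ≤ Fintype.card ι := by exact_mod_cast hι
      linarith [card_div_four_le_sum_sq_of_sub_half_mem_intLattice hv]
  · rintro ⟨i, rfl | rfl⟩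
    · exact ⟨mem_sup_left (subset_span ⟨i, rfl⟩), by simp [Pi.single_apply]⟩
    · exact ⟨neg_mem (mem_sup_left (subset_span ⟨i, rfl⟩)), by simp [Pi.single_apply]⟩

end IntLattice

/-- For `n ≥ 4`, let `L ⊂ ℝⁿ` be the lattice generated by `½(e₁ + ⋯ + eₙ)` (i.e. the
constant vector `½`) together with `e₂, …, eₙ`.  Then `L` contains `ℤⁿ` as a sublattice of
index `2`, every nonzero `v ∈ L` satisfies `v₁² + ⋯ + vₙ² ≥ 1`, and if `n > 4` then the
nonzero vectors of `L` of minimal squared length `1` are exactly the `2n` vectors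
`±e₁, …, ±eₙ`.  Indices are `0`-based. -/
theorem FS_dual_lattice_minimal_vectors (n : ℕ) (hn : 4 ≤ n)
    (L : Submodule ℤ (Fin n → ℝ))
    (hL : L = Submodule.span ℤ
        ({fun _ => (1 : ℝ) / 2} ∪
          {v : Fin n → ℝ | ∃ i : Fin n, i.val ≠ 0 ∧ v = Pi.single i 1}))
    (Zn : Submodule ℤ (Fin n → ℝ))
    (hZn : Zn = Submodule.span ℤ (Set.range fun i : Fin n => (Pi.single i 1 : Fin n → ℝ))) :
    Zn ≤ L ∧
    Zn.toAddSubgroup.relIndex L.toAddSubgroup = 2 ∧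
    (∀ v ∈ L, v ≠ 0 → 1 ≤ ∑ i, v i ^ 2) ∧
    (4 < n →
      {v : Fin n → ℝ | v ∈ L ∧ ∑ i, v i ^ 2 = 1} =
        {v | ∃ i : Fin n, v = Pi.single i 1 ∨ v = -Pi.single i 1}) := by
  have : NeZero n := ⟨by omega⟩
  obtain rfl : L = intLattice (Fin n) ⊔ ℤ ∙ fun _ => (1 : ℝ) / 2 := by
    simp_rw [hL, Fin.val_ne_zero_iff, span_half_union_single_ne_eq]
  obtain rfl : Zn = intLattice (Fin n) := hZn
  exact ⟨le_sup_left,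
    relIndex_sup_span_singleton_eq_two two_smul_half_mem_intLattice half_notMem_intLattice,
    fun v => one_le_sum_sq_of_mem_intLattice_sup_half (by rwa [Fintype.card_fin]),
    fun hn' => setOf_mem_intLattice_sup_half_sum_sq_eq_one (by rwa [Fintype.card_fin])⟩
end

section
/- For all real numbers a, b ≥ 0, the quadratic form a(2x₁ − x₂)² + b x₂² on ℝ² lies in one of two explicit cones generated by squares of unimodular systems of linear forms: if a ≤ b then a(2x₁ − x₂)² + b x₂² = 2a·x₁² + 2a·(x₁ − x₂)² + (b − a)·x₂², so it lies in the cone ℝ_{≥0}⟨x₁², x₂², (x₁ − x₂)²⟩; and if b ≤ a then a(2x₁ − x₂)² + b x₂² = (a − b)·(2x₁ − x₂)² + 2b·x₁² + 2b·(x₁ − x₂)², so it lies in the cone ℝ_{≥0}⟨(2x₁ − x₂)², x₁², (x₁ − x₂)²⟩. In particular, the Friedman–Smith cone for n = 2 is covered by its barycentric subdivision into two cones, each contained in a matroidal cone. -/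
/-- For all reals `a, b ≥ 0`, the quadratic form `a(2x₁ − x₂)² + b x₂²` lies in one of two
explicit cones generated by squares of unimodular systems of linear forms: if `a ≤ b`, then
`a(2x₁ − x₂)² + b x₂² = 2a x₁² + 2a (x₁ − x₂)² + (b − a) x₂²`, so it lies in the cone
`ℝ≥0⟨x₁², x₂², (x₁ − x₂)²⟩`; and if `b ≤ a`, then
`a(2x₁ − x₂)² + b x₂² = (a − b)(2x₁ − x₂)² + 2b x₁² + 2b (x₁ − x₂)²`, so it lies in the cone
`ℝ≥0⟨(2x₁ − x₂)², x₁², (x₁ − x₂)²⟩`. -/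
theorem FS2_barycentric_subdivision (a b : ℝ) (ha : 0 ≤ a) (hb : 0 ≤ b) :
    (a ≤ b →
      (∀ x₁ x₂ : ℝ,
          a * (2 * x₁ - x₂) ^ 2 + b * x₂ ^ 2 =
            2 * a * x₁ ^ 2 + 2 * a * (x₁ - x₂) ^ 2 + (b - a) * x₂ ^ 2) ∧
      ∃ c₁ c₂ c₃ : ℝ, 0 ≤ c₁ ∧ 0 ≤ c₂ ∧ 0 ≤ c₃ ∧
        ∀ x₁ x₂ : ℝ,
          a * (2 * x₁ - x₂) ^ 2 + b * x₂ ^ 2 =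
            c₁ * x₁ ^ 2 + c₂ * x₂ ^ 2 + c₃ * (x₁ - x₂) ^ 2) ∧
    (b ≤ a →
      (∀ x₁ x₂ : ℝ,
          a * (2 * x₁ - x₂) ^ 2 + b * x₂ ^ 2 =
            (a - b) * (2 * x₁ - x₂) ^ 2 + 2 * b * x₁ ^ 2 + 2 * b * (x₁ - x₂) ^ 2) ∧
      ∃ c₁ c₂ c₃ : ℝ, 0 ≤ c₁ ∧ 0 ≤ c₂ ∧ 0 ≤ c₃ ∧
        ∀ x₁ x₂ : ℝ,
          a * (2 * x₁ - x₂) ^ 2 + b * x₂ ^ 2 =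
            c₁ * (2 * x₁ - x₂) ^ 2 + c₂ * x₁ ^ 2 + c₃ * (x₁ - x₂) ^ 2) := by
  constructor
  · intro hab
    refine ⟨fun x₁ x₂ => by ring, 2 * a, b - a, 2 * a, by linarith, by linarith,
      by linarith, fun x₁ x₂ => by ring⟩
  · intro hba
    refine ⟨fun x₁ x₂ => by ring, a - b, 2 * b, 2 * b, by linarith, by linarith,
      by linarith, fun x₁ x₂ => by ring⟩
end

section
/- For all real numbers a, b, c with 0 ≤ a ≤ b and a ≤ c, the identity a(2x₁ − x₂ − x₃)² + b x₂² + c x₃² = a·[x₁² + (x₁ − x₂)² + (x₁ − x₃)² + (x₁ − x₂ − x₃)²] + (b − a)·x₂² + (c − a)·x₃² holds; in particular, every such element of the Friedman–Smith cone for n = 3 lies in the cone ℝ_{≥0}⟨x₁², x₂², x₃², (x₁ − x₂)², (x₁ − x₃)², (x₁ − x₂ − x₃)²⟩. -/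
/-- For all reals `0 ≤ a ≤ b` and `a ≤ c`, the identity
`a(2x₁ − x₂ − x₃)² + b x₂² + c x₃²
  = a[x₁² + (x₁ − x₂)² + (x₁ − x₃)² + (x₁ − x₂ − x₃)²] + (b − a) x₂² + (c − a) x₃²`
holds; in particular every such element of the Friedman–Smith cone for `n = 3` lies in the
cone `ℝ≥0⟨x₁², x₂², x₃², (x₁ − x₂)², (x₁ − x₃)², (x₁ − x₂ − x₃)²⟩`. -/
theorem FS3_barycentric_subdivision (a b c : ℝ) (ha : 0 ≤ a) (hab : a ≤ b) (hac : a ≤ c) :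
    (∀ x₁ x₂ x₃ : ℝ,
      a * (2 * x₁ - x₂ - x₃) ^ 2 + b * x₂ ^ 2 + c * x₃ ^ 2 =
        a * (x₁ ^ 2 + (x₁ - x₂) ^ 2 + (x₁ - x₃) ^ 2 + (x₁ - x₂ - x₃) ^ 2) +
          (b - a) * x₂ ^ 2 + (c - a) * x₃ ^ 2) ∧
    ∃ c₁ c₂ c₃ c₄ c₅ c₆ : ℝ,
      0 ≤ c₁ ∧ 0 ≤ c₂ ∧ 0 ≤ c₃ ∧ 0 ≤ c₄ ∧ 0 ≤ c₅ ∧ 0 ≤ c₆ ∧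
      ∀ x₁ x₂ x₃ : ℝ,
        a * (2 * x₁ - x₂ - x₃) ^ 2 + b * x₂ ^ 2 + c * x₃ ^ 2 =
          c₁ * x₁ ^ 2 + c₂ * x₂ ^ 2 + c₃ * x₃ ^ 2 + c₄ * (x₁ - x₂) ^ 2 +
            c₅ * (x₁ - x₃) ^ 2 + c₆ * (x₁ - x₂ - x₃) ^ 2 := by
  refine ⟨fun x₁ x₂ x₃ => by ring, a, b - a, c - a, a, a, a, ha, by linarith, by linarith,
    ha, ha, ha, fun x₁ x₂ x₃ => by ring⟩
end

section
/- For every n ≥ 2, the quadratic form Q(z) = Σ_{i=1}^{n−1} zᵢ² + Σ_{i=1}^{n−2} zᵢz_{i+1} on ℝ^{n−1} is positive definite, takes integer values on ℤ^{n−1} (hence Q(v) ≥ 1 for every nonzero v ∈ ℤ^{n−1}), and takes the value 1 on each of the n Wirtinger vectors: Q(e₁) = 1, Q(e_{i+1} − eᵢ) = 1 for i = 1,…,n−2, and Q(−e_{n−1}) = 1. (Hence the monodromy cone of a Wirtinger admissible cover with 2n nodes is contained in a cone of the perfect cone and central cone decompositions.) -/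
open Finset

noncomputable def QE (m : ℕ) (z : Fin m → ℝ) : ℝ :=
  (∑ i, z i ^ 2) +
    ∑ i : Fin m, ∑ j : Fin m, if j.val = i.val + 1 then z i * z j else 0

lemma wpf_sum_collapse {m : ℕ} (g : Fin m → ℝ) (i : Fin m) :
    (∑ j : Fin m, if j.val = i.val + 1 then g j else 0)
      = if h : i.val + 1 < m then g ⟨i.val + 1, h⟩ else 0 := by
  split_ifs with h
  · rw [Finset.sum_eq_single (⟨i.val + 1, h⟩ : Fin m)]
    · simp
    · intro j _ hj
      rw [if_neg]
      exact fun hv => hj (Fin.ext hv)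
    · simp
  · apply Finset.sum_eq_zero
    intro j _
    rw [if_neg]
    exact fun hv => h (hv ▸ j.isLt)

lemma wpf_sum_collapse' {m : ℕ} (c : ℝ) (j : Fin m) :
    (∑ i : Fin m, if j.val = i.val + 1 then c else 0) = if 0 < j.val then c else 0 := by
  split_ifs with h
  · rw [Finset.sum_eq_single (⟨j.val - 1, by omega⟩ : Fin m)]
    · rw [if_pos]
      simp only [Fin.val_mk]
      omega
    · intro i _ hi
      rw [if_neg]
      intro hv
      apply hi
      apply Fin.ext
      simp only [Fin.val_mk]
      omega
    · simp
  · apply Finset.sum_eq_zero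
    intro i _
    rw [if_neg]
    omega

lemma QE_eq {m : ℕ} (z : Fin m → ℝ) :
    QE m z = (∑ i, z i ^ 2) +
      ∑ i : Fin m, (if h : i.val + 1 < m then z i * z ⟨i.val + 1, h⟩ else 0) := by
  unfold QE
  congr 1
  exact Finset.sum_congr rfl fun i _ => wpf_sum_collapse (fun j => z i * z j) i

lemma wpf_shift_sq {m : ℕ} (z : Fin m → ℝ) :
    (∑ i : Fin m, if h : i.val + 1 < m then z ⟨i.val + 1, h⟩ ^ 2 else 0)
      = ∑ j : Fin m, if 0 < j.val then z j ^ 2 else 0 := by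
  have e : ∀ i : Fin m, (if h : i.val + 1 < m then z ⟨i.val + 1, h⟩ ^ 2 else 0)
      = ∑ j : Fin m, if j.val = i.val + 1 then z j ^ 2 else 0 :=
    fun i => (wpf_sum_collapse (fun j => z j ^ 2) i).symm
  rw [Finset.sum_congr rfl fun i _ => e i, Finset.sum_comm]
  exact Finset.sum_congr rfl fun j _ => wpf_sum_collapse' (z j ^ 2) j

lemma wpf_head_split {m : ℕ} (hm : 0 < m) (z : Fin m → ℝ) :
    (∑ i, z i ^ 2)
      = (∑ i : Fin m, if i.val + 1 < m then z i ^ 2 else 0) + z ⟨m - 1, by omega⟩ ^ 2 := by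
  have e : ∀ i : Fin m, z i ^ 2 =
      (if i.val + 1 < m then z i ^ 2 else 0) + (if i.val + 1 < m then 0 else z i ^ 2) := by
    intro i; split_ifs <;> ring
  rw [Finset.sum_congr rfl fun i _ => e i, Finset.sum_add_distrib]
  congr 1
  rw [Finset.sum_eq_single (⟨m - 1, by omega⟩ : Fin m)]
  · rw [if_neg]
    simp only [Fin.val_mk]
    omega
  · intro i _ hi
    rw [if_pos]
    have : i.val ≠ m - 1 := by
      intro hv
      exact hi (Fin.ext (by simp only [Fin.val_mk]; omega))
    omega
  · simp
  
lemma wpf_zero_split {m : ℕ} (hm : 0 < m) (z : Fin m → ℝ) :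
    (∑ i, z i ^ 2)
      = (∑ j : Fin m, if 0 < j.val then z j ^ 2 else 0) + z ⟨0, hm⟩ ^ 2 := by
  have e : ∀ j : Fin m, z j ^ 2 =
      (if 0 < j.val then z j ^ 2 else 0) + (if 0 < j.val then 0 else z j ^ 2) := by
    intro j; split_ifs <;> ring
  rw [Finset.sum_congr rfl fun j _ => e j, Finset.sum_add_distrib]
  congr 1
  rw [Finset.sum_eq_single (⟨0, hm⟩ : Fin m)]
  · rw [if_neg]
    simp
  · intro j _ hj
    rw [if_pos]
    have : j.val ≠ 0 := by
      intro hv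
      exact hj (Fin.ext (by simp only [Fin.val_mk]; omega))
    omega
  · simp

lemma wpf_two_QE {m : ℕ} (hm : 0 < m) (z : Fin m → ℝ) :
    2 * QE m z = z ⟨0, hm⟩ ^ 2 + z ⟨m - 1, by omega⟩ ^ 2 +
      ∑ i : Fin m, (if h : i.val + 1 < m then (z i + z ⟨i.val + 1, h⟩) ^ 2 else 0) := by
  have expand : ∀ i : Fin m,
      (if h : i.val + 1 < m then (z i + z ⟨i.val + 1, h⟩) ^ 2 else 0)
      = (if i.val + 1 < m then z i ^ 2 else 0)
        + 2 * (if h : i.val + 1 < m then z i * z ⟨i.val + 1, h⟩ else 0)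
        + (if h : i.val + 1 < m then z ⟨i.val + 1, h⟩ ^ 2 else 0) := by
    intro i
    by_cases h : i.val + 1 < m
    · simp only [dif_pos h, if_pos h]; ring
    · simp only [dif_neg h, if_neg h]; ring
  rw [Finset.sum_congr rfl fun i _ => expand i]
  rw [Finset.sum_add_distrib, Finset.sum_add_distrib, ← Finset.mul_sum, wpf_shift_sq]
  rw [QE_eq]
  have h1 := wpf_head_split hm z
  have h2 := wpf_zero_split hm z
  linarith

lemma wpf_dite_sq_nonneg {m : ℕ} (z : Fin m → ℝ) (i : Fin m) :
    0 ≤ if h : i.val + 1 < m then (z i + z ⟨i.val + 1, h⟩) ^ 2 else 0 := by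
  split_ifs with h
  · positivity
  · exact le_refl 0

lemma QE_nonneg {m : ℕ} (hm : 0 < m) (z : Fin m → ℝ) : 0 ≤ QE m z := by
  have h := wpf_two_QE hm z
  have hT : 0 ≤ ∑ i : Fin m,
      (if h : i.val + 1 < m then (z i + z ⟨i.val + 1, h⟩) ^ 2 else 0) :=
    Finset.sum_nonneg fun i _ => wpf_dite_sq_nonneg z i
  nlinarith [sq_nonneg (z ⟨0, hm⟩), sq_nonneg (z ⟨m - 1, by omega⟩)]

lemma QE_pos {m : ℕ} (hm : 0 < m) (z : Fin m → ℝ) (hz : z ≠ 0) : 0 < QE m z := by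
  rcases lt_or_eq_of_le (QE_nonneg hm z) with h | h
  · exact h
  exfalso
  have h2 := wpf_two_QE hm z
  rw [← h] at h2
  have hT : 0 ≤ ∑ i : Fin m,
      (if h : i.val + 1 < m then (z i + z ⟨i.val + 1, h⟩) ^ 2 else 0) :=
    Finset.sum_nonneg fun i _ => wpf_dite_sq_nonneg z i
  have hz0 : z ⟨0, hm⟩ = 0 := by
    nlinarith [sq_nonneg (z ⟨0, hm⟩), sq_nonneg (z ⟨m - 1, by omega⟩)]
  have hTz : ∑ i : Fin m,
      (if h : i.val + 1 < m then (z i + z ⟨i.val + 1, h⟩) ^ 2 else 0) = 0 := by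
    nlinarith [sq_nonneg (z ⟨0, hm⟩), sq_nonneg (z ⟨m - 1, by omega⟩)]
  have hstep : ∀ i : Fin m, ∀ h : i.val + 1 < m, z i + z ⟨i.val + 1, h⟩ = 0 := by
    intro i h
    have h0 := (Finset.sum_eq_zero_iff_of_nonneg
      (fun i _ => wpf_dite_sq_nonneg z i)).mp hTz i (Finset.mem_univ i)
    rw [dif_pos h] at h0
    exact pow_eq_zero_iff (n := 2) (by norm_num) |>.mp h0
  have hall : ∀ k, ∀ hk : k < m, z ⟨k, hk⟩ = 0 := by
    intro k
    induction k with
    | zero => intro hk; exact hz0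
    | succ k ih =>
      intro hk
      have hk' : k < m := by omega
      have := hstep ⟨k, hk'⟩ hk
      rw [ih hk'] at this
      linarith
  apply hz
  funext i
  have := hall i.val i.isLt
  simpa using this

lemma QE_single {m : ℕ} (k : Fin m) : QE m (Pi.single k (1:ℝ)) = 1 := by
  rw [QE_eq]
  have hsq : ∀ i : Fin m, ((Pi.single k 1 : Fin m → ℝ) i) ^ 2 = if i = k then 1 else 0 := by
    intro i
    rcases eq_or_ne i k with h | h
    · subst h; simp
    · simp [Pi.single_eq_of_ne h, h]
  have h1 : (∑ i, ((Pi.single k 1 : Fin m → ℝ) i) ^ 2) = 1 := by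
    rw [Finset.sum_congr rfl fun i _ => hsq i]
    simp
  have h2 : (∑ i : Fin m, if h : i.val + 1 < m then
      (Pi.single k 1 : Fin m → ℝ) i * (Pi.single k 1 : Fin m → ℝ) ⟨i.val + 1, h⟩ else 0) = 0 := by
    apply Finset.sum_eq_zero
    intro i _
    split_ifs with h
    · rcases eq_or_ne i k with hik | hik
      · have : (⟨i.val + 1, h⟩ : Fin m) ≠ k := by
          intro hv
          rw [← hik] at hv
          have := congrArg Fin.val hv
          simp at this
        rw [Pi.single_eq_of_ne this]
        ring
      · rw [Pi.single_eq_of_ne hik]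
        ring
    · rfl
  rw [h1, h2]; norm_num

lemma QE_neg {m : ℕ} (z : Fin m → ℝ) : QE m (-z) = QE m z := by
  unfold QE
  simp [neg_mul_neg]

lemma QE_diff {m : ℕ} (a : Fin m) (h : a.val + 1 < m) :
    QE m (Pi.single (⟨a.val + 1, h⟩ : Fin m) (1:ℝ) - Pi.single a 1) = 1 := by
  set b : Fin m := ⟨a.val + 1, h⟩ with hb
  set w : Fin m → ℝ := Pi.single b (1:ℝ) - Pi.single a 1 with hw
  have hab : a ≠ b := by
    intro hv
    have := congrArg Fin.val hv
    simp [hb] at this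
  have hwv : ∀ i : Fin m, w i = (if i = b then 1 else 0) - (if i = a then 1 else 0) := by
    intro i
    simp [hw, Pi.single_apply]
  rw [QE_eq]
  have h1 : (∑ i, w i ^ 2) = 2 := by
    have e : ∀ i : Fin m, w i ^ 2 = (if i = b then 1 else 0) + (if i = a then 1 else 0) := by
      intro i
      rw [hwv i]
      rcases eq_or_ne i b with h' | h' <;> rcases eq_or_ne i a with h'' | h''
      · exact absurd (h''.symm.trans h') hab
      all_goals simp [h', h'', hab, Ne.symm hab] <;> ring
    rw [Finset.sum_congr rfl fun i _ => e i, Finset.sum_add_distrib]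
    simp
    norm_num
  have h2 : (∑ i : Fin m, if hi : i.val + 1 < m then w i * w ⟨i.val + 1, hi⟩ else 0)
      = -1 := by
    have e : ∀ i : Fin m, (if hi : i.val + 1 < m then w i * w ⟨i.val + 1, hi⟩ else 0)
        = if i = a then -1 else 0 := by
      intro i
      rcases eq_or_ne i a with hia | hia
      · subst hia
        rw [dif_pos h, if_pos rfl]
        have : (⟨i.val + 1, h⟩ : Fin m) = b := rfl
        rw [this, hwv, hwv]
        have hiab : i ≠ b := by
          intro hv
          have := congrArg Fin.val hv
          simp [hb] at this
        rw [if_pos rfl, if_neg hiab, if_neg hab.symm, if_pos rfl]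
        norm_num
      · rw [if_neg hia]
        split_ifs with hi
        · rcases eq_or_ne i b with hib | hib
          · -- w ⟨i+1⟩ = 0 since i+1 = b+1 = a+2 ∉ {a,b}
            have hna : (⟨i.val + 1, hi⟩ : Fin m) ≠ a := by
              intro hv
              have := congrArg Fin.val hv
              subst hib
              simp [hb] at this
              omega
            have hnb : (⟨i.val + 1, hi⟩ : Fin m) ≠ b := by
              intro hv
              have := congrArg Fin.val hv
              simp [hb] at this
              subst hib
              simp [hb] at this
            rw [hwv ⟨i.val + 1, hi⟩, if_neg hnb, if_neg hna]
            ring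
          · rw [hwv i, if_neg hib, if_neg hia]
            ring
        · rfl
    rw [Finset.sum_congr rfl fun i _ => e i]
    simp
  rw [h1, h2]; norm_num

lemma QE_int {m : ℕ} (v : Fin m → ℤ) :
    ∃ M : ℤ, QE m (fun k => (v k : ℝ)) = (M : ℝ) := by
  refine ⟨(∑ i, v i ^ 2) +
    ∑ i : Fin m, ∑ j : Fin m, (if j.val = i.val + 1 then v i * v j else 0), ?_⟩
  unfold QE
  push_cast [apply_ite (fun x : ℤ => (x : ℝ))]
  rfl

/-- For every `n ≥ 2`, the quadratic form
`Q(z) = ∑_{i=1}^{n−1} zᵢ² + ∑_{i=1}^{n−2} zᵢ z_{i+1}`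
on `ℝ^{n−1}` is positive definite, takes integer values on `ℤ^{n−1}` (hence `Q(v) ≥ 1` for
every nonzero `v ∈ ℤ^{n−1}`), and takes the value `1` on each of the `n` Wirtinger vectors
`e₁`, `e_{i+1} − eᵢ` (`i = 1, …, n−2`) and `−e_{n−1}`.  (Hence the monodromy cone of a
Wirtinger admissible cover with `2n` nodes is contained in a cone of the perfect cone and
central cone decompositions.)  Indices are `0`-based. -/
theorem wirtinger_perfect_form (n : ℕ) (hn : 2 ≤ n) (Q : (Fin (n - 1) → ℝ) → ℝ)
    (hQ : Q = fun z =>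
      (∑ i, z i ^ 2) +
        ∑ i : Fin (n - 1), ∑ j : Fin (n - 1),
          if j.val = i.val + 1 then z i * z j else 0) :
    (∀ z : Fin (n - 1) → ℝ, z ≠ 0 → 0 < Q z) ∧
    (∀ v : Fin (n - 1) → ℤ, ∃ m : ℤ, Q (fun k => (v k : ℝ)) = (m : ℝ)) ∧
    (∀ v : Fin (n - 1) → ℤ, v ≠ 0 → 1 ≤ Q fun k => (v k : ℝ)) ∧
    Q (Pi.single (⟨0, by omega⟩ : Fin (n - 1)) 1) = 1 ∧
    (∀ i : Fin (n - 1), ∀ hi : i.val + 1 < n - 1,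
      Q (Pi.single (⟨i.val + 1, by omega⟩ : Fin (n - 1)) 1 - Pi.single i 1) = 1) ∧
    Q (-Pi.single (⟨n - 2, by omega⟩ : Fin (n - 1)) 1) = 1 := by
  have hm : 0 < n - 1 := by omega
  have hQ' : ∀ z : Fin (n - 1) → ℝ, Q z = QE (n - 1) z := by
    intro z; rw [hQ]; rfl
  refine ⟨?_, ?_, ?_, ?_, ?_, ?_⟩
  · intro z hz
    rw [hQ']
    exact QE_pos hm z hz
  · intro v
    obtain ⟨M, hM⟩ := QE_int v
    exact ⟨M, by rw [hQ']; exact hM⟩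
  · intro v hv
    obtain ⟨M, hM⟩ := QE_int v
    have hznz : (fun k => ((v k : ℝ))) ≠ 0 := by
      intro h0
      apply hv
      funext k
      have : ((v k : ℝ)) = 0 := congrFun h0 k
      exact_mod_cast this
    have hpos : (0 : ℝ) < QE (n - 1) (fun k => (v k : ℝ)) := QE_pos hm _ hznz
    rw [hM] at hpos
    have : (0 : ℤ) < M := by exact_mod_cast hpos
    rw [hQ', hM]
    exact_mod_cast this
  · rw [hQ']
    exact QE_single _
  · intro i hi
    rw [hQ']
    exact QE_diff i hi
  · rw [hQ', QE_neg]
    exact QE_single _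
end
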